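/- arXiv:2104.03555 — 6 statements merged into one kernel-verified Lean document; each statement's English description precedes it below -/
import Mathlib

section
/- Let A be an NBW over an alphabet Σ with classical congruence ∼. For all u, v ∈ Σ*, if the ω-language [u]_∼[v]_∼^ω is proper, then either [u]_∼[v]_∼^ω ∩ L(A) = ∅ or [u]_∼[v]_∼^ω ⊆ L(A). -/
open scoped Classical

/-- A nondeterministic Büchi automaton over alphabet `α` with state type `Q`. -/
structure NBW (α : Type) (Q : Type) where
  I : Set Q
  δ : Q → α → Set Q
  F : Set Q

namespace NBW

variable {α Q : Type}

/-- One-step successor set: `δ(S, a) = ⋃_{q ∈ S} δ(q, a)`. -/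
def δStep (A : NBW α Q) (S : Set Q) (a : α) : Set Q := ⋃ q ∈ S, A.δ q a

/-- Extension of `δ` to finite words: `δ(S, ε) = S`, `δ(S, ua) = δ(δ(S, u), a)`. -/
def δSet (A : NBW α Q) (S : Set Q) (u : List α) : Set Q := u.foldl A.δStep S

/-- `A.Reach q u r` means `q →ᵘ r`: there is a run of `A` over `u` from `q` to `r`. -/
def Reach (A : NBW α Q) : Q → List α → Q → Prop
  | q, [], r => q = r
  | q, a :: u, r => ∃ p ∈ A.δ q a, A.Reach p u r

/-- `A.FReach q u r` means `q ⇒ᵘ r`: there is a run of `A` over `u` from `q` to `r`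
visiting some accepting state. -/
def FReach (A : NBW α Q) : Q → List α → Q → Prop
  | q, [], r => q = r ∧ q ∈ A.F
  | q, a :: u, r =>
      (q ∈ A.F ∧ ∃ p ∈ A.δ q a, A.Reach p u r) ∨ ∃ p ∈ A.δ q a, A.FReach p u r

/-- The classical congruence `∼`:  `u₁ ∼ u₂` iff for all states `q, r`,
`q →^{u₁} r ↔ q →^{u₂} r` and `q ⇒^{u₁} r ↔ q ⇒^{u₂} r`. -/
def canoEq (A : NBW α Q) (u₁ u₂ : List α) : Prop :=
  ∀ q r : Q, (A.Reach q u₁ r ↔ A.Reach q u₂ r) ∧ (A.FReach q u₁ r ↔ A.FReach q u₂ r)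

/-- The `∼`-equivalence class of `u`. -/
def canoClass (A : NBW α Q) (u : List α) : Set (List α) := {x | A.canoEq u x}

/-- The right congruence `∼ⁱ`: `u₁ ∼ⁱ u₂` iff `δ(I, u₁) = δ(I, u₂)`. -/
def iEq (A : NBW α Q) (u₁ u₂ : List α) : Prop := A.δSet A.I u₁ = A.δSet A.I u₂

/-- The `∼ⁱ`-equivalence class of `u`. -/
def iClass (A : NBW α Q) (u : List α) : Set (List α) := {x | A.iEq u x}

/-- The relation `≈ᵤ`: `v₁ ≈ᵤ v₂` iff for all `q ∈ δ(I, u)` and all states `r`,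
`q →^{v₁} r ↔ q →^{v₂} r` and `q ⇒^{v₁} r ↔ q ⇒^{v₂} r`. -/
def proEq (A : NBW α Q) (u v₁ v₂ : List α) : Prop :=
  ∀ q ∈ A.δSet A.I u, ∀ r : Q,
    (A.Reach q v₁ r ↔ A.Reach q v₂ r) ∧ (A.FReach q v₁ r ↔ A.FReach q v₂ r)

/-- The `≈ᵤ`-equivalence class of `v`. -/
def proClass (A : NBW α Q) (u v : List α) : Set (List α) := {x | A.proEq u v x}

/-- Büchi acceptance of an ω-word `w : ℕ → α`. -/
def AcceptsOmega (A : NBW α Q) (w : ℕ → α) : Prop :=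
  ∃ ρ : ℕ → Q, ρ 0 ∈ A.I ∧ (∀ i, ρ (i + 1) ∈ A.δ (ρ i) (w i)) ∧
    ∀ n, ∃ i, n ≤ i ∧ ρ i ∈ A.F

/-- The ω-language of `A`. -/
def L (A : NBW α Q) : Set (ℕ → α) := {w | A.AcceptsOmega w}

end NBW

/-- Elementwise concatenation of two languages of finite words. -/
def Lang.concat {α : Type} (X Y : Set (List α)) : Set (List α) :=
  {z | ∃ x ∈ X, ∃ y ∈ Y, z = x ++ y}

/-- `OmegaLang U V` is the set of ω-words of the form `u₀ v₁ v₂ ⋯` with `u₀ ∈ U`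
and each `vᵢ` a nonempty word in `V`: every finite prefix `u₀ v₁ ⋯ v_k` is a
prefix of `w`. -/
def OmegaLang {α : Type} (U V : Set (List α)) : Set (ℕ → α) :=
  {w | ∃ u₀ ∈ U, ∃ vs : ℕ → List α,
    (∀ i, vs i ≠ [] ∧ vs i ∈ V) ∧
    ∀ k : ℕ,
      u₀ ++ ((List.range k).map vs).flatten =
        List.ofFn fun i : Fin (u₀ ++ ((List.range k).map vs).flatten).length => w i.1}

/-- The ω-language `[u]_∼ [v]_∼^ω` is proper if `[u][v] ⊆ [u]` and `[v][v] ⊆ [v]`. -/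
def IsProper {α Q : Type} (A : NBW α Q) (u v : List α) : Prop :=
  Lang.concat (A.canoClass u) (A.canoClass v) ⊆ A.canoClass u ∧
  Lang.concat (A.canoClass v) (A.canoClass v) ⊆ A.canoClass v

/-!
If some word of `[u][v]^ω` is accepted, pigeonhole on the states that an accepting run takes at
the block boundaries gives a state `q` visited at two boundaries enclosing an accepting position;
properness puts the prefix up to the first boundary in `[u]` and the factor between the two in
`[v]`, so `q₀ →ᵘ q` and `q ⇒ᵛ q` for an initial state `q₀`. Conversely, such a lasso transfers
along `∼` to the prefix and to every block of any word `u₀ v₁ v₂ ⋯` of `[u][v]^ω`, and gluing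
the runs over the blocks yields an accepting run.
-/

open Set

lemma StrictMono.exists_mem_Ico {S : ℕ → ℕ} (hS : StrictMono S) {n : ℕ} (hn : S 0 ≤ n) :
    ∃ k, n ∈ Ico (S k) (S (k + 1)) := by
  induction n, hn using Nat.le_induction with
  | base => exact ⟨0, le_rfl, hS Nat.zero_lt_one⟩
  | succ n _ ih =>
    obtain ⟨k, hkn, hnk⟩ := ih
    rcases (Nat.succ_le_of_lt hnk).lt_or_eq with h | h
    · exact ⟨k, hkn.trans n.le_succ, h⟩
    · exact ⟨k + 1, h.ge, h.trans_lt (hS (Nat.lt_succ_self _))⟩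

lemma StrictMono.exists_eqOn_Icc {β : Type} {S : ℕ → ℕ} (hS : StrictMono S) (f : ℕ → ℕ → β)
    (hlink : ∀ k, f k (S (k + 1)) = f (k + 1) (S (k + 1))) :
    ∃ g : ℕ → β, ∀ k, EqOn g (f k) (Icc (S k) (S (k + 1))) := by
  have hex : ∀ n, ∃ k, n < S (k + 1) := fun n => ⟨n, (Nat.lt_succ_self n).trans_le (hS.id_le _)⟩
  have hblock : ∀ {n k}, n ∈ Ico (S k) (S (k + 1)) → Nat.find (hex n) = k := fun {n k} h =>
    le_antisymm (Nat.find_le h.2)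
      (Nat.lt_succ_iff.mp (hS.lt_iff_lt.mp (h.1.trans_lt (Nat.find_spec (hex n)))))
  refine ⟨fun n => f (Nat.find (hex n)) n, fun k n ⟨hkn, hnk⟩ => ?_⟩
  rcases hnk.lt_or_eq with hlt | rfl
  · exact congrArg (f · n) (hblock ⟨hkn, hlt⟩)
  · rw [hlink]
    exact congrArg (f · _) (hblock ⟨le_rfl, hS (Nat.lt_succ_self _)⟩)

namespace OmegaWord

variable {α : Type}

/-- The factor `w m ⋯ w (n - 1)` of an ω-word; it is empty when `n ≤ m`. -/
def extract (w : ℕ → α) (m n : ℕ) : List α := (List.range' m (n - m)).map w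

@[simp]
lemma extract_self (w : ℕ → α) (m : ℕ) : extract w m m = [] := by
  simp [extract]

lemma extract_eq_cons (w : ℕ → α) {m n : ℕ} (h : m < n) :
    extract w m n = w m :: extract w (m + 1) n := by
  obtain ⟨d, rfl⟩ := Nat.exists_eq_add_of_lt h
  simp [extract, show m + d + 1 - m = d + 1 by omega, show m + d + 1 - (m + 1) = d by omega,
    List.range'_succ]

lemma extract_append (w : ℕ → α) {m n p : ℕ} (hmn : m ≤ n) (hnp : n ≤ p) :
    extract w m n ++ extract w n p = extract w m p := by
  obtain ⟨d, rfl⟩ := Nat.exists_eq_add_of_le hmn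
  obtain ⟨e, rfl⟩ := Nat.exists_eq_add_of_le hnp
  simp [extract, ← List.map_append, List.range'_append_1, Nat.add_assoc,
    show m + (d + e) - (m + d) = e by omega]

lemma extract_zero_eq_ofFn (w : ℕ → α) (n : ℕ) :
    extract w 0 n = List.ofFn fun i : Fin n => w i := by
  apply List.ext_getElem <;> simp [extract]

lemma extract_mem_of_concat_subset {X V : Set (List α)} (hXV : Lang.concat X V ⊆ X)
    {w : ℕ → α} {S : ℕ → ℕ} (hS : Monotone S) (hV : ∀ k, extract w (S k) (S (k + 1)) ∈ V)
    {a k : ℕ} (ha : a ≤ S k) (hX : extract w a (S k) ∈ X) {l : ℕ} (hkl : k ≤ l) :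
    extract w a (S l) ∈ X := by
  induction l, hkl using Nat.le_induction with
  | base => exact hX
  | succ l hkl ih =>
    have hal : a ≤ S l := ha.trans (hS hkl)
    rw [← extract_append w hal (hS l.le_succ)]
    exact hXV ⟨_, ih, _, hV l, rfl⟩

end OmegaWord

open OmegaWord

lemma OmegaLang.exists_strictMono_of_mem {α : Type} {U V : Set (List α)} {w : ℕ → α}
    (hw : w ∈ OmegaLang U V) :
    ∃ S : ℕ → ℕ, StrictMono S ∧ extract w 0 (S 0) ∈ U ∧
      ∀ k, extract w (S k) (S (k + 1)) ∈ V := by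
  obtain ⟨u₀, hu₀, vs, hvs, hprefix⟩ := hw
  set P : ℕ → List α := fun k => u₀ ++ ((List.range k).map vs).flatten
  have hP : ∀ k, P k = extract w 0 (P k).length := fun k => by
    rw [extract_zero_eq_ofFn]; exact hprefix k
  have hPsucc : ∀ k, P (k + 1) = P k ++ vs k := fun k => by
    simp [P, List.range_succ]
  have hvs_eq : ∀ k, vs k = extract w (P k).length (P (k + 1)).length := fun k => by
    have hle : (P k).length ≤ (P (k + 1)).length := by simp [hPsucc]
    refine List.append_cancel_left (as := P k) ?_
    calc P k ++ vs k = extract w 0 (P (k + 1)).length := (hPsucc k).symm.trans (hP _)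
      _ = P k ++ extract w (P k).length (P (k + 1)).length := by
        rw [← extract_append w (Nat.zero_le _) hle, ← hP k]
  refine ⟨fun k => (P k).length, strictMono_nat_of_lt_succ fun k => ?_, ?_, fun k => ?_⟩
  · simpa [hPsucc] using List.length_pos_iff.mpr (hvs k).1
  · show extract w 0 (P 0).length ∈ U
    rw [← hP 0]
    simpa [P] using hu₀
  · exact hvs_eq k ▸ (hvs k).2

namespace NBW

variable {α Q : Type} (A : NBW α Q)

def IsRunOn (w : ℕ → α) (ρ : ℕ → Q) (s : Set ℕ) : Prop :=
  ∀ i ∈ s, ρ (i + 1) ∈ A.δ (ρ i) (w i)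

def AcceptsLasso (u v : List α) : Prop :=
  ∃ q₀ ∈ A.I, ∃ q, A.Reach q₀ u q ∧ A.FReach q v q

variable {A}

lemma isRunOn_Ico_iff {w : ℕ → α} {ρ : ℕ → Q} {m n : ℕ} (h : m < n) :
    A.IsRunOn w ρ (Ico m n) ↔ ρ (m + 1) ∈ A.δ (ρ m) (w m) ∧ A.IsRunOn w ρ (Ico (m + 1) n) := by
  refine ⟨fun hρ => ⟨hρ m ⟨le_rfl, h⟩, fun i hi => hρ i ⟨Nat.le_of_succ_le hi.1, hi.2⟩⟩, ?_⟩
  rintro ⟨hm, hρ⟩ i ⟨hmi, hin⟩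
  rcases hmi.eq_or_lt with rfl | hlt
  · exact hm
  · exact hρ i ⟨hlt, hin⟩

lemma IsRunOn.update {w : ℕ → α} {ρ : ℕ → Q} {m n : ℕ} (hρ : A.IsRunOn w ρ (Ico (m + 1) n))
    {p : Q} (hp : ρ (m + 1) ∈ A.δ p (w m)) (h : m < n) :
    A.IsRunOn w (Function.update ρ m p) (Ico m n) := by
  refine (isRunOn_Ico_iff h).2 ⟨by simpa using hp, fun i hi => ?_⟩
  have him : i ≠ m := Nat.ne_of_gt hi.1
  have hi1m : i + 1 ≠ m := Nat.ne_of_gt (Nat.lt_succ_of_lt hi.1)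
  simpa [Function.update_of_ne him, Function.update_of_ne hi1m] using hρ i hi

theorem reach_extract_iff {w : ℕ → α} {m n : ℕ} (hmn : m ≤ n) {p r : Q} :
    A.Reach p (extract w m n) r ↔ ∃ ρ : ℕ → Q, ρ m = p ∧ ρ n = r ∧ A.IsRunOn w ρ (Ico m n) := by
  induction hmn using Nat.decreasingInduction generalizing p with
  | self =>
    simp only [extract_self, Reach]
    exact ⟨fun h => ⟨fun _ => p, rfl, h, fun i hi => absurd hi (by simp)⟩,
      fun ⟨ρ, h0, h1, _⟩ => h0 ▸ h1⟩
  | of_succ m hmn ih =>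
    rw [extract_eq_cons w hmn]
    refine ⟨fun ⟨p', hp', hr⟩ => ?_, fun ⟨ρ, hρm, hρn, hρ⟩ => ?_⟩
    · obtain ⟨ρ, hρm, hρn, hρ⟩ := ih.1 hr
      exact ⟨Function.update ρ m p, by simp, by simp [hmn.ne', hρn], hρ.update (hρm ▸ hp') hmn⟩
    · obtain ⟨hstep, hρ'⟩ := (isRunOn_Ico_iff hmn).1 hρ
      exact ⟨ρ (m + 1), hρm ▸ hstep, ih.2 ⟨ρ, rfl, hρn, hρ'⟩⟩

theorem freach_extract_iff {w : ℕ → α} {m n : ℕ} (hmn : m ≤ n) {p r : Q} :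
    A.FReach p (extract w m n) r ↔ ∃ ρ : ℕ → Q, ρ m = p ∧ ρ n = r ∧ A.IsRunOn w ρ (Ico m n) ∧
      ∃ j ∈ Icc m n, ρ j ∈ A.F := by
  induction hmn using Nat.decreasingInduction generalizing p with
  | self =>
    simp only [extract_self, FReach]
    refine ⟨fun ⟨h, hF⟩ =>
      ⟨fun _ => p, rfl, h, fun i hi => absurd hi (by simp), n, by simp, hF⟩, ?_⟩
    rintro ⟨ρ, rfl, rfl, -, j, ⟨h₁, h₂⟩, hF⟩
    obtain rfl : j = n := le_antisymm h₂ h₁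
    exact ⟨rfl, hF⟩
  | of_succ m hmn ih =>
    rw [extract_eq_cons w hmn]
    constructor
    · rintro (⟨hpF, p', hp', hr⟩ | ⟨p', hp', hr⟩)
      · obtain ⟨ρ, hρm, hρn, hρ⟩ := (reach_extract_iff hmn).1 hr
        exact ⟨Function.update ρ m p, by simp, by simp [hmn.ne', hρn], hρ.update (hρm ▸ hp') hmn,
          m, ⟨le_rfl, hmn.le⟩, by simpa using hpF⟩
      · obtain ⟨ρ, hρm, hρn, hρ, j, hj, hjF⟩ := ih.1 hr
        refine ⟨Function.update ρ m p, by simp, by simp [hmn.ne', hρn], hρ.update (hρm ▸ hp') hmn,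
          j, ⟨Nat.le_of_succ_le hj.1, hj.2⟩, ?_⟩
        rwa [Function.update_of_ne (Nat.ne_of_gt hj.1)]
    · rintro ⟨ρ, rfl, hρn, hρ, j, ⟨hmj, hjn⟩, hjF⟩
      obtain ⟨hstep, hρ'⟩ := (isRunOn_Ico_iff hmn).1 hρ
      rcases hmj.eq_or_lt with rfl | hlt
      · exact Or.inl ⟨hjF, ρ (m + 1), hstep, (reach_extract_iff hmn).2 ⟨ρ, rfl, hρn, hρ'⟩⟩
      · exact Or.inr ⟨ρ (m + 1), hstep, ih.2 ⟨ρ, rfl, hρn, hρ', j, ⟨hlt, hjn⟩, hjF⟩⟩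

theorem mem_L_of_blocks {w : ℕ → α} {S : ℕ → ℕ} (hS : StrictMono S) {q₀ : Q} (hq₀ : q₀ ∈ A.I)
    {q : ℕ → Q} (hpre : A.Reach q₀ (extract w 0 (S 0)) (q 0))
    (hblock : ∀ k, A.FReach (q k) (extract w (S k) (S (k + 1))) (q (k + 1))) : w ∈ A.L := by
  obtain ⟨g, hg0, hgS, hg⟩ := (reach_extract_iff (Nat.zero_le _)).1 hpre
  choose f hfS hfS' hf j hj hjF using
    fun k => (freach_extract_iff (hS.monotone k.le_succ)).1 (hblock k)
  obtain ⟨ρ, hρ⟩ := hS.exists_eqOn_Icc f fun k => (hfS' k).trans (hfS (k + 1)).symm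
  have hρrun : A.IsRunOn w ρ (Ici (S 0)) := fun i hi => by
    obtain ⟨k, hk⟩ := hS.exists_mem_Ico hi
    rw [hρ k (Ico_subset_Icc_self hk), hρ k ⟨hk.1.trans i.le_succ, hk.2⟩]
    exact hf k i hk
  have hρS : ρ (S 0) = g (S 0) := by rw [hρ 0 ⟨le_rfl, (hS Nat.zero_lt_one).le⟩, hfS, hgS]
  set ρ' : ℕ → Q := fun n => if n < S 0 then g n else ρ n
  have hlow : EqOn ρ' g (Iic (S 0)) := fun n hn => by
    rcases (show n ≤ S 0 from hn).lt_or_eq with h | rfl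
    · simp [ρ', h]
    · simp [ρ', hρS]
  have hhigh : EqOn ρ' ρ (Ici (S 0)) := fun n hn => if_neg (not_lt.2 hn)
  refine ⟨ρ', ?_, fun i => ?_, fun n => ⟨j n, ?_, ?_⟩⟩
  · rw [hlow (Nat.zero_le _), hg0]
    exact hq₀
  · rcases lt_or_ge i (S 0) with hi | hi
    · rw [hlow hi.le, hlow (show i + 1 ≤ S 0 from hi)]
      exact hg i ⟨Nat.zero_le _, hi⟩
    · rw [hhigh hi, hhigh (hi.trans i.le_succ)]
      exact hρrun i hi
  · exact (hS.id_le n).trans (hj n).1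
  · rw [hhigh ((hS.monotone (Nat.zero_le n)).trans (hj n).1), hρ n (hj n)]
    exact hjF n

theorem AcceptsLasso.omegaLang_subset_L {u v : List α} (h : A.AcceptsLasso u v) :
    OmegaLang (A.canoClass u) (A.canoClass v) ⊆ A.L := by
  obtain ⟨q₀, hq₀, q, hu, hv⟩ := h
  intro w hw
  obtain ⟨S, hS, hpre, hblock⟩ := OmegaLang.exists_strictMono_of_mem hw
  exact mem_L_of_blocks hS hq₀ (q := fun _ => q) ((hpre q₀ q).1.1 hu) fun k => (hblock k q q).2.1 hv

theorem acceptsLasso_of_mem [Finite Q] {u v : List α} (h : IsProper A u v) {w : ℕ → α}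
    (hw : w ∈ OmegaLang (A.canoClass u) (A.canoClass v)) (hacc : w ∈ A.L) :
    A.AcceptsLasso u v := by
  obtain ⟨S, hS, hpre, hblock⟩ := OmegaLang.exists_strictMono_of_mem hw
  obtain ⟨ρ, hρ0, hρ, hF⟩ := hacc
  obtain ⟨q, hq⟩ := Finite.exists_infinite_fiber fun k => ρ (S k)
  have hq := Set.infinite_coe_iff.mp hq
  obtain ⟨k, hk : ρ (S k) = q⟩ := hq.nonempty
  obtain ⟨i, hki, hi⟩ := hF (S k)
  obtain ⟨l, hl : ρ (S l) = q, hil⟩ := hq.exists_gt i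
  have hkl : k < l := hS.lt_iff_lt.mp (hki.trans_lt (hil.trans_le (hS.id_le l)))
  have hu : extract w 0 (S k) ∈ A.canoClass u :=
    extract_mem_of_concat_subset h.1 hS.monotone hblock (Nat.zero_le _) hpre (Nat.zero_le k)
  have hv : extract w (S k) (S l) ∈ A.canoClass v :=
    extract_mem_of_concat_subset h.2 hS.monotone hblock (hS.monotone k.le_succ) (hblock k) hkl
  refine ⟨ρ 0, hρ0, q, (hu (ρ 0) q).1.2 ?_, (hv q q).2.2 ?_⟩
  · exact (reach_extract_iff (Nat.zero_le _)).2 ⟨ρ, rfl, hk, fun i _ => hρ i⟩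
  · exact (freach_extract_iff (hS.monotone hkl.le)).2
      ⟨ρ, hk, hl, fun i _ => hρ i, i, ⟨hki, hil.le.trans (hS.id_le l)⟩, hi⟩

end NBW

/-- if `[u]_∼[v]_∼^ω` is proper, then it is either disjoint from
`L(A)` or contained in `L(A)`. -/
theorem proper_saturation {α Q : Type} [Fintype Q] (A : NBW α Q) (u v : List α)
    (h : IsProper A u v) :
    OmegaLang (A.canoClass u) (A.canoClass v) ∩ A.L = ∅ ∨
      OmegaLang (A.canoClass u) (A.canoClass v) ⊆ A.L := by
  rcases (OmegaLang (A.canoClass u) (A.canoClass v) ∩ A.L).eq_empty_or_nonempty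
    with hempty | ⟨w, hw, hacc⟩
  · exact Or.inl hempty
  · exact Or.inr (NBW.acceptsLasso_of_mem h hw hacc).omegaLang_subset_L
end

section
/- Let A be an NBW over an alphabet Σ with classical congruence ∼. Every ω-word w ∈ Σ^ω belongs to [u]_∼[v]_∼^ω for some u ∈ Σ* and some nonempty v ∈ Σ⁺ such that [u]_∼[v]_∼^ω is proper; that is, Σ^ω is the union of the proper languages [u]_∼[v]_∼^ω. -/
open scoped Classical

namespace NBW
variable {α Q : Type}

theorem Reach_append (A : NBW α Q) (u v : List α) (q r : Q) :
    A.Reach q (u ++ v) r ↔ ∃ p, A.Reach q u p ∧ A.Reach p v r := by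
  induction u generalizing q with
  | nil => simp [Reach]
  | cons a u ih =>
    simp only [List.cons_append, Reach, List.append_eq, ih]
    constructor
    · rintro ⟨p, hp, s, h1, h2⟩; exact ⟨s, ⟨p, hp, h1⟩, h2⟩
    · rintro ⟨s, ⟨p, hp, h1⟩, h2⟩; exact ⟨p, hp, s, h1, h2⟩

theorem FReach_of_mem_F (A : NBW α Q) {u : List α} {q r : Q}
    (hq : q ∈ A.F) (h : A.Reach q u r) : A.FReach q u r := by
  cases u with
  | nil => exact ⟨h, hq⟩
  | cons a u => exact Or.inl ⟨hq, h⟩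

theorem FReach_append (A : NBW α Q) (u v : List α) (q r : Q) :
    A.FReach q (u ++ v) r ↔
      ∃ p, (A.FReach q u p ∧ A.Reach p v r) ∨ (A.Reach q u p ∧ A.FReach p v r) := by
  induction u generalizing q with
  | nil =>
    simp only [List.nil_append, FReach, Reach]
    constructor
    · intro h; exact ⟨q, Or.inr ⟨rfl, h⟩⟩
    · rintro ⟨p, (⟨⟨rfl, hF⟩, h⟩ | ⟨rfl, h⟩)⟩
      · exact A.FReach_of_mem_F hF h
      · exact h
  | cons a u ih =>
    simp only [List.cons_append, FReach, List.append_eq, Reach_append, ih]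
    constructor
    · rintro (⟨hF, p, hp, s, h1, h2⟩ | ⟨p, hp, s, (⟨h1, h2⟩ | ⟨h1, h2⟩)⟩)
      · exact ⟨s, Or.inl ⟨Or.inl ⟨hF, p, hp, h1⟩, h2⟩⟩
      · exact ⟨s, Or.inl ⟨Or.inr ⟨p, hp, h1⟩, h2⟩⟩
      · exact ⟨s, Or.inr ⟨⟨p, hp, h1⟩, h2⟩⟩
    · rintro ⟨s, (⟨(⟨hF, p, hp, h1⟩ | ⟨p, hp, h1⟩), h2⟩ | ⟨⟨p, hp, h1⟩, h2⟩)⟩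
      · exact Or.inl ⟨hF, p, hp, s, h1, h2⟩
      · exact Or.inr ⟨p, hp, s, Or.inl ⟨h1, h2⟩⟩
      · exact Or.inr ⟨p, hp, s, Or.inr ⟨h1, h2⟩⟩

theorem canoEq_refl (A : NBW α Q) (u : List α) : A.canoEq u u :=
  fun _ _ => ⟨Iff.rfl, Iff.rfl⟩

theorem canoEq_symm {A : NBW α Q} {u v : List α} (h : A.canoEq u v) : A.canoEq v u :=
  fun q r => ⟨(h q r).1.symm, (h q r).2.symm⟩

theorem canoEq_trans {A : NBW α Q} {u v x : List α} (h1 : A.canoEq u v)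
    (h2 : A.canoEq v x) : A.canoEq u x :=
  fun q r => ⟨(h1 q r).1.trans (h2 q r).1, (h1 q r).2.trans (h2 q r).2⟩

theorem canoEq_append {A : NBW α Q} {u₁ u₂ v₁ v₂ : List α} (hu : A.canoEq u₁ u₂)
    (hv : A.canoEq v₁ v₂) : A.canoEq (u₁ ++ v₁) (u₂ ++ v₂) := by
  intro q r
  constructor
  · simp only [Reach_append]
    constructor
    · rintro ⟨p, h1, h2⟩; exact ⟨p, (hu q p).1.mp h1, (hv p r).1.mp h2⟩
    · rintro ⟨p, h1, h2⟩; exact ⟨p, (hu q p).1.mpr h1, (hv p r).1.mpr h2⟩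
  · simp only [FReach_append]
    constructor
    · rintro ⟨p, (⟨h1, h2⟩ | ⟨h1, h2⟩)⟩
      · exact ⟨p, Or.inl ⟨(hu q p).2.mp h1, (hv p r).1.mp h2⟩⟩
      · exact ⟨p, Or.inr ⟨(hu q p).1.mp h1, (hv p r).2.mp h2⟩⟩
    · rintro ⟨p, (⟨h1, h2⟩ | ⟨h1, h2⟩)⟩
      · exact ⟨p, Or.inl ⟨(hu q p).2.mpr h1, (hv p r).1.mpr h2⟩⟩
      · exact ⟨p, Or.inr ⟨(hu q p).1.mpr h1, (hv p r).2.mpr h2⟩⟩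

/-- the finite invariant determining the `∼`-class -/
noncomputable def relMap (A : NBW α Q) (u : List α) : (Q → Q → Prop) × (Q → Q → Prop) :=
  ⟨fun q r => A.Reach q u r, fun q r => A.FReach q u r⟩

theorem canoEq_iff_relMap_eq (A : NBW α Q) (u v : List α) :
    A.canoEq u v ↔ A.relMap u = A.relMap v := by
  constructor
  · intro h
    have h1 : (fun q r => A.Reach q u r) = fun q r => A.Reach q v r := by
      funext q r; exact propext (h q r).1
    have h2 : (fun q r => A.FReach q u r) = fun q r => A.FReach q v r := by
      funext q r; exact propext (h q r).2
    exact Prod.ext h1 h2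
  · intro h q r
    constructor
    · exact iff_of_eq (congrFun (congrFun (congrArg Prod.fst h) q) r)
    · exact iff_of_eq (congrFun (congrFun (congrArg Prod.snd h) q) r)

end NBW


namespace MyAux

/-- enumerate an infinite set of naturals by a strictly monotone function -/
theorem exists_strictMono_mem {S : Set ℕ} (h : S.Infinite) :
    ∃ f : ℕ → ℕ, StrictMono f ∧ ∀ n, f n ∈ S := by
  have step : ∀ a : ℕ, ∃ b ∈ S, a < b := fun a => h.exists_gt a
  classical
  let f : ℕ → ℕ := fun n => Nat.rec (h.nonempty.choose) (fun _ p => (step p).choose) n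
  have hf0 : f 0 ∈ S := h.nonempty.choose_spec
  have hfs : ∀ n, f (n+1) ∈ S ∧ f n < f (n+1) := fun n => by
    have := (step (f n)).choose_spec
    exact ⟨this.1, this.2⟩
  refine ⟨f, strictMono_nat_of_lt_succ (fun n => (hfs n).2), fun n => ?_⟩
  cases n with
  | zero => exact hf0
  | succ m => exact (hfs m).1

/-- infinite pigeonhole -/
theorem exists_infinite_fiber_on {κ : Type*} [Finite κ] {S : Set ℕ} (h : S.Infinite)
    (f : ℕ → κ) : ∃ k, {m ∈ S | f m = k}.Infinite := by
  by_contra hc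
  push_neg at hc
  have : S = ⋃ k : κ, {m ∈ S | f m = k} := by
    ext m; simp only [Set.mem_iUnion, Set.mem_setOf_eq]; constructor
    · intro hm; exact ⟨f m, hm, rfl⟩
    · rintro ⟨k, hm, _⟩; exact hm
  exact h (this ▸ Set.finite_iUnion hc)

/-- Infinite Ramsey theorem for pairs. -/
theorem ramsey_pairs {κ : Type*} [Finite κ] (c : ℕ → ℕ → κ) :
    ∃ k : κ, ∃ g : ℕ → ℕ, StrictMono g ∧ ∀ i j, i < j → c (g i) (g j) = k := by
  classical
  -- step: from an infinite set S produce a ∈ S, color k, infinite S' ⊆ S with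
  -- all m ∈ S' satisfying a < m and c a m = k
  have stepex : ∀ S : Set ℕ, S.Infinite → ∃ p : ℕ × κ × Set ℕ,
      p.2.2.Infinite ∧ p.2.2 ⊆ S ∧ p.1 ∈ S ∧ ∀ m ∈ p.2.2, p.1 < m ∧ c p.1 m = p.2.1 := by
    intro S hS
    obtain ⟨a, haS⟩ := hS.nonempty
    have hS' : {m ∈ S | a < m}.Infinite := by
      have : {m ∈ S | a < m} = S \ Set.Iic a := by
        ext m; simp [Set.mem_diff, not_le, and_comm]
      rw [this]; exact hS.diff (Set.finite_Iic a)
    obtain ⟨k, hk⟩ := exists_infinite_fiber_on hS' (c a)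
    refine ⟨⟨a, k, {m ∈ {m ∈ S | a < m} | c a m = k}⟩, hk, ?_, haS, ?_⟩
    · intro m hm; exact hm.1.1
    · intro m hm; exact ⟨hm.1.2, hm.2⟩
  let step : {S : Set ℕ // S.Infinite} → ℕ × κ × {S : Set ℕ // S.Infinite} :=
    fun S => ⟨(stepex S.1 S.2).choose.1, (stepex S.1 S.2).choose.2.1,
      ⟨(stepex S.1 S.2).choose.2.2, (stepex S.1 S.2).choose_spec.1⟩⟩
  let seq : ℕ → {S : Set ℕ // S.Infinite} :=
    fun n => Nat.rec ⟨Set.univ, Set.infinite_univ⟩ (fun _ S => (step S).2.2) n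
  let a : ℕ → ℕ := fun n => (step (seq n)).1
  let k : ℕ → κ := fun n => (step (seq n)).2.1
  have hspec : ∀ n, (seq (n+1)).1 ⊆ (seq n).1 ∧ a n ∈ (seq n).1 ∧
      ∀ m ∈ (seq (n+1)).1, a n < m ∧ c (a n) m = k n := by
    intro n
    have h := (stepex (seq n).1 (seq n).2).choose_spec
    exact ⟨h.2.1, h.2.2.1, h.2.2.2⟩
  have hsub : ∀ i j, i ≤ j → (seq j).1 ⊆ (seq i).1 := by
    intro i j hij
    induction j with
    | zero => cases Nat.le_zero.mp hij; exact fun _ h => h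
    | succ m ih =>
      rcases Nat.lt_or_ge i (m+1) with h | h
      · exact fun x hx => ih (Nat.lt_succ_iff.mp h) ((hspec m).1 hx)
      · cases Nat.le_antisymm hij h; exact fun _ h => h
  have key : ∀ i j, i < j → a i < a j ∧ c (a i) (a j) = k i := by
    intro i j hij
    have : a j ∈ (seq (i+1)).1 := hsub (i+1) j hij ((hspec j).2.1)
    exact (hspec i).2.2 _ this
  obtain ⟨kk, hkk⟩ := exists_infinite_fiber_on (Set.infinite_univ) k
  obtain ⟨h, hmono, hmem⟩ := exists_strictMono_mem hkk
  refine ⟨kk, a ∘ h, ?_, ?_⟩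
  · intro i j hij; exact (key _ _ (hmono hij)).1
  · intro i j hij
    have := (key _ _ (hmono hij)).2
    simpa [this] using (hmem i).2

end MyAux

namespace MyAux
variable {α : Type}

/-- the prefix of length `n` of an ω-word -/
def pref (w : ℕ → α) (n : ℕ) : List α := List.ofFn fun i : Fin n => w i.1

/-- the segment `w[a..b)` of an ω-word -/
def seg (w : ℕ → α) (a b : ℕ) : List α := List.ofFn fun i : Fin (b - a) => w (a + i.1)

theorem pref_append_seg (w : ℕ → α) {a b : ℕ} (h : a ≤ b) :
    pref w a ++ seg w a b = pref w b := by
  apply List.ext_getElem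
  · simp [pref, seg]; omega
  · intro i h1 h2
    simp only [pref, seg, List.getElem_append, List.getElem_ofFn, List.length_ofFn]
    split
    · rfl
    · congr 1; omega

theorem seg_append (w : ℕ → α) {a b c : ℕ} (hab : a ≤ b) (hbc : b ≤ c) :
    seg w a b ++ seg w b c = seg w a c := by
  apply List.ext_getElem
  · simp [seg]; omega
  · intro i h1 h2
    simp only [seg, List.getElem_append, List.getElem_ofFn, List.length_ofFn]
    split
    · rfl
    · congr 1; omega

theorem pref_eq_ofFn (w : ℕ → α) (n : ℕ) :
    pref w n = List.ofFn fun i : Fin (pref w n).length => w i.1 := by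
  apply List.ext_getElem
  · simp
  · intro i h1 h2; simp [pref]

end MyAux

open MyAux in
theorem omega_covered_by_proper' {α Q : Type} [Fintype Q] (A : NBW α Q) (w : ℕ → α) :
    ∃ u v : List α, v ≠ [] ∧ IsProper A u v ∧
      w ∈ OmegaLang (A.canoClass u) (A.canoClass v) := by
  classical
  obtain ⟨k, g, hg, hgk⟩ := ramsey_pairs (fun i j => A.relMap (seg w i j))
  obtain ⟨e, he⟩ := exists_infinite_fiber_on Set.infinite_univ
    (fun n => A.relMap (pref w (g n)))
  obtain ⟨h, hh, hhe⟩ := exists_strictMono_mem he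
  set m : ℕ → ℕ := fun i => g (h i) with hm
  have hmono : StrictMono m := hg.comp hh
  have segEq : ∀ i j, i < j → A.relMap (seg w (m i) (m j)) = k := by
    intro i j hij; exact hgk (h i) (h j) (hh hij)
  have prefEq : ∀ i j, A.relMap (pref w (m i)) = A.relMap (pref w (m j)) := by
    intro i j
    have h1 := (hhe i).2
    have h2 := (hhe j).2
    rw [h1, h2]
  set u : List α := pref w (m 0) with hu
  set v : List α := seg w (m 0) (m 1) with hv
  have hsegv : ∀ i j, i < j → A.canoEq v (seg w (m i) (m j)) := by
    intro i j hij
    rw [NBW.canoEq_iff_relMap_eq, segEq 0 1 Nat.zero_lt_one, segEq i j hij]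
  have huv : A.canoEq u (u ++ v) := by
    rw [hu, hv, pref_append_seg w (hmono Nat.zero_lt_one).le,
      NBW.canoEq_iff_relMap_eq]
    exact prefEq 0 1
  have hvv : A.canoEq v (v ++ v) := by
    have hseg12 : A.canoEq v (seg w (m 1) (m 2)) := hsegv 1 2 Nat.one_lt_two
    have h1 : A.canoEq (v ++ v) (seg w (m 0) (m 1) ++ seg w (m 1) (m 2)) :=
      NBW.canoEq_append (A.canoEq_refl v) hseg12
    rw [seg_append w (hmono Nat.zero_lt_one).le (hmono Nat.one_lt_two).le] at h1
    exact NBW.canoEq_trans (hsegv 0 2 Nat.zero_lt_two) (NBW.canoEq_symm h1)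
  refine ⟨u, v, ?_, ⟨?_, ?_⟩, ?_⟩
  · -- v ≠ []
    have hlen : v.length = m 1 - m 0 := by simp [hv, seg]
    intro hnil
    rw [hnil] at hlen
    have h01 := hmono Nat.zero_lt_one
    simp at hlen
    omega
  · -- [u][v] ⊆ [u]
    rintro z ⟨x, hx, y, hy, rfl⟩
    have : A.canoEq (u ++ v) (x ++ y) := NBW.canoEq_append hx hy
    exact NBW.canoEq_trans huv this
  · -- [v][v] ⊆ [v]
    rintro z ⟨x, hx, y, hy, rfl⟩
    have : A.canoEq (v ++ v) (x ++ y) := NBW.canoEq_append hx hy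
    exact NBW.canoEq_trans hvv this
  · -- w ∈ OmegaLang
    refine ⟨u, A.canoEq_refl u, fun i => seg w (m i) (m (i+1)), ?_, ?_⟩
    · intro i
      refine ⟨?_, hsegv i (i+1) (Nat.lt_succ_self i)⟩
      intro hnil
      have hnil' : seg w (m i) (m (i+1)) = [] := hnil
      have hlen : (seg w (m i) (m (i+1))).length = m (i+1) - m i := by simp [seg]
      rw [hnil'] at hlen
      have hlt := hmono (show i < i + 1 by omega)
      simp at hlen
      omega
    · intro n
      have key : u ++ ((List.range n).map fun i => seg w (m i) (m (i+1))).flatten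
          = pref w (m n) := by
        induction n with
        | zero => simp [hu]
        | succ j ih =>
          rw [List.range_succ, List.map_append, List.flatten_append, ← List.append_assoc, ih]
          simp only [List.map_cons, List.map_nil, List.flatten_cons, List.flatten_nil,
            List.append_nil]
          exact pref_append_seg w (hmono (Nat.lt_succ_self j)).le
      rw [key]
      exact pref_eq_ofFn w (m n)

/-- `Σ^ω` is the union of the proper languages `[u]_∼[v]_∼^ω`. -/
theorem omega_covered_by_proper {α Q : Type} [Fintype Q] (A : NBW α Q) (w : ℕ → α) :
    ∃ u v : List α, v ≠ [] ∧ IsProper A u v ∧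
      w ∈ OmegaLang (A.canoClass u) (A.canoClass v) := by
  exact omega_covered_by_proper' A w
end

section
/- Let A be an NBW over an alphabet Σ. For every u ∈ Σ* and nonempty v ∈ Σ⁺ with uv ∼ⁱ u, either [u]_{∼ⁱ}[v]_{≈ᵤ}^ω ∩ L(A) = ∅ or [u]_{∼ⁱ}[v]_{≈ᵤ}^ω ⊆ L(A). -/
open scoped Classical

namespace NBW
variable {α Q : Type}

theorem reach_nil_iff (A : NBW α Q) (q r : Q) : A.Reach q [] r ↔ q = r := Iff.rfl

theorem δSet_append (A : NBW α Q) (S : Set Q) (x y : List α) :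
    A.δSet S (x ++ y) = A.δSet (A.δSet S x) y := List.foldl_append ..

theorem mem_δSet_iff (A : NBW α Q) (S : Set Q) (x : List α) (r : Q) :
    r ∈ A.δSet S x ↔ ∃ q ∈ S, A.Reach q x r := by
  induction x generalizing S with
  | nil => simp [δSet, Reach, eq_comm]
  | cons a x ih =>
    show r ∈ A.δSet (A.δStep S a) x ↔ _
    rw [ih]
    constructor
    · rintro ⟨p, hp, hpr⟩
      simp only [δStep, Set.mem_iUnion] at hp
      obtain ⟨q, hq, hpq⟩ := hp
      exact ⟨q, hq, p, hpq, hpr⟩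
    · rintro ⟨q, hq, p, hpq, hpr⟩
      refine ⟨p, ?_, hpr⟩
      simp only [δStep, Set.mem_iUnion]
      exact ⟨q, hq, hpq⟩

theorem run_reach (A : NBW α Q) (w : ℕ → α) (ρ : ℕ → Q)
    (hρ : ∀ i, ρ (i + 1) ∈ A.δ (ρ i) (w i)) :
    ∀ (x : List α) (m : ℕ), (∀ j, (hj : j < x.length) → w (m + j) = x[j]) →
      A.Reach (ρ m) x (ρ (m + x.length)) := by
  intro x
  induction x with
  | nil => intro m _; rfl
  | cons a x ih =>
    intro m hm
    refine ⟨ρ (m + 1), ?_, ?_⟩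
    · have h0 : w m = a := hm 0 (by simp)
      rw [← h0]; exact hρ m
    · have := ih (m + 1) (fun j hj => by
        have := hm (j + 1) (by simpa using Nat.succ_lt_succ hj)
        simpa [Nat.add_assoc, Nat.add_comm 1 j] using this)
      simpa [Nat.add_comm 1, Nat.add_assoc, Nat.add_left_comm] using this

theorem run_freach (A : NBW α Q) (w : ℕ → α) (ρ : ℕ → Q)
    (hρ : ∀ i, ρ (i + 1) ∈ A.δ (ρ i) (w i)) :
    ∀ (x : List α) (m : ℕ), (∀ j, (hj : j < x.length) → w (m + j) = x[j]) →
      (∃ j, j < x.length ∧ ρ (m + j) ∈ A.F) →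
      A.FReach (ρ m) x (ρ (m + x.length)) := by
  intro x
  induction x with
  | nil => rintro m _ ⟨j, hj, _⟩; exact absurd hj (by simp)
  | cons a x ih =>
    rintro m hm ⟨j, hj, hjF⟩
    have hstep : ρ (m + 1) ∈ A.δ (ρ m) a := by
      have h0 : w m = a := hm 0 (by simp)
      rw [← h0]; exact hρ m
    rcases Nat.eq_zero_or_pos j with rfl | hjpos
    · left
      refine ⟨by simpa using hjF, ρ (m + 1), hstep, ?_⟩
      have := A.run_reach w ρ hρ x (m + 1) (fun j hj => by
        have := hm (j + 1) (by simpa using Nat.succ_lt_succ hj)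
        simpa [Nat.add_assoc, Nat.add_comm 1 j] using this)
      simpa [Nat.add_comm 1, Nat.add_assoc, Nat.add_left_comm] using this
    · right
      refine ⟨ρ (m + 1), hstep, ?_⟩
      obtain ⟨j', rfl⟩ := Nat.exists_eq_add_of_le hjpos
      have := ih (m + 1) (fun j hj => by
          have := hm (j + 1) (by simpa using Nat.succ_lt_succ hj)
          simpa [Nat.add_assoc, Nat.add_comm 1 j] using this)
        ⟨j', by simp only [List.length_cons] at hj; omega, by simpa [Nat.add_comm 1, Nat.add_assoc, Nat.add_left_comm] using hjF⟩
      simpa [Nat.add_comm 1, Nat.add_assoc, Nat.add_left_comm] using this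

end NBW
namespace NBW
variable {α Q : Type}

theorem reach_exists_fun (A : NBW α Q) :
    ∀ (x : List α) (q r : Q), A.Reach q x r →
      ∃ f : ℕ → Q, f 0 = q ∧ f x.length = r ∧
        ∀ j, (hj : j < x.length) → f (j + 1) ∈ A.δ (f j) x[j] := by
  intro x
  induction x with
  | nil =>
    intro q r hr
    exact ⟨fun _ => q, rfl, hr, by simp⟩
  | cons a x ih =>
    rintro q r ⟨p, hp, hpr⟩
    obtain ⟨f', h0, hlen, hstep⟩ := ih p r hpr
    refine ⟨fun n => match n with | 0 => q | n + 1 => f' n, rfl, hlen, ?_⟩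
    intro j hj
    match j with
    | 0 => simpa [h0] using hp
    | j + 1 =>
      exact hstep j (by simp only [List.length_cons] at hj; omega)

theorem freach_exists_fun (A : NBW α Q) :
    ∀ (x : List α) (q r : Q), A.FReach q x r →
      ∃ f : ℕ → Q, f 0 = q ∧ f x.length = r ∧
        (∀ j, (hj : j < x.length) → f (j + 1) ∈ A.δ (f j) x[j]) ∧
        ∃ j, j ≤ x.length ∧ f j ∈ A.F := by
  intro x
  induction x with
  | nil =>
    rintro q r ⟨rfl, hF⟩
    exact ⟨fun _ => q, rfl, rfl, by simp, 0, le_refl _, hF⟩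
  | cons a x ih =>
    rintro q r (⟨hqF, p, hp, hpr⟩ | ⟨p, hp, hpr⟩)
    · obtain ⟨f', h0, hlen, hstep⟩ := A.reach_exists_fun x p r hpr
      refine ⟨fun n => match n with | 0 => q | n + 1 => f' n, rfl, hlen, ?_, 0, by simp, hqF⟩
      intro j hj
      match j with
      | 0 => simpa [h0] using hp
      | j + 1 => exact hstep j (by simp only [List.length_cons] at hj; omega)
    · obtain ⟨f', h0, hlen, hstep, j', hj', hF'⟩ := ih p r hpr
      refine ⟨fun n => match n with | 0 => q | n + 1 => f' n, rfl, hlen, ?_, j' + 1, by simpa using hj', hF'⟩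
      intro j hj
      match j with
      | 0 => simpa [h0] using hp
      | j + 1 => exact hstep j (by simp only [List.length_cons] at hj; omega)

theorem block_fun (A : NBW α Q) (x : List α) (q r : Q) (hr : A.Reach q x r) :
    ∃ f : ℕ → Q, f 0 = q ∧ f x.length = r ∧
      (∀ j, (hj : j < x.length) → f (j + 1) ∈ A.δ (f j) x[j]) ∧
      (A.FReach q x r → ∃ j, j ≤ x.length ∧ f j ∈ A.F) := by
  by_cases hF : A.FReach q x r
  · obtain ⟨f, h0, hlen, hstep, hj⟩ := A.freach_exists_fun x q r hF
    exact ⟨f, h0, hlen, hstep, fun _ => hj⟩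
  · obtain ⟨f, h0, hlen, hstep⟩ := A.reach_exists_fun x q r hr
    exact ⟨f, h0, hlen, hstep, fun h => absurd h hF⟩

theorem accepts_of_blocks (A : NBW α Q) (w : ℕ → α) (B : ℕ → List α) (τ : ℕ → Q)
    (hne : ∀ k, 1 ≤ k → B k ≠ [])
    (hI : τ 0 ∈ A.I)
    (hreach : ∀ k, A.Reach (τ k) (B k) (τ (k + 1)))
    (hF : ∀ K, ∃ k, K ≤ k ∧ A.FReach (τ k) (B k) (τ (k + 1)))
    (hw : ∀ k j, (hj : j < (B k).length) →
        w ((((List.range k).map B).flatten).length + j) = (B k)[j]) :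
    A.AcceptsOmega w := by
  classical
  set P : ℕ → ℕ := fun k => (((List.range k).map B).flatten).length with hP
  have hP0 : P 0 = 0 := by simp [hP]
  have hPsucc : ∀ k, P (k + 1) = P k + (B k).length := by
    intro k; simp [hP, List.range_succ]
  have hlenpos : ∀ k, 0 < (B (k + 1)).length := fun k =>
    List.length_pos_iff.mpr (hne (k + 1) (Nat.le_add_left 1 k))
  have hmono : Monotone P := monotone_nat_of_le_succ (fun k => by rw [hPsucc]; omega)
  have hPk : ∀ k, k ≤ P k + 1 := by
    intro k
    induction k with
    | zero => omega
    | succ k ih =>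
      have := hPsucc k
      rcases Nat.eq_zero_or_pos k with rfl | hk
      · have := hlenpos 0; have := hPsucc 0; omega
      · have : 0 < (B k).length := List.length_pos_iff.mpr (hne k hk)
        omega
  -- choose run functions per block
  choose f hf0 hflen hfstep hfF using fun k => A.block_fun (B k) (τ k) (τ (k + 1)) (hreach k)
  set kidx : ℕ → ℕ := fun n => Nat.findGreatest (fun k => P k ≤ n) (n + 1) with hkidx
  have hk1 : ∀ n, P (kidx n) ≤ n := by
    intro n
    exact Nat.findGreatest_spec (P := fun k => P k ≤ n) (Nat.zero_le _)
      (show P 0 ≤ n by omega)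
  have hk2 : ∀ n, n < P (kidx n + 1) := by
    intro n
    by_contra hcon
    push_neg at hcon
    exact Nat.findGreatest_is_greatest (P := fun k => P k ≤ n) (n := n + 1)
      (Nat.lt_succ_self _)
      (by have he : Nat.findGreatest (fun k => P k ≤ n) (n + 1) = kidx n := rfl
          rw [he]; have := hPk (kidx n + 1); omega) hcon
  have kidx_eq : ∀ n k, P k ≤ n → n < P (k + 1) → kidx n = k := by
    intro n k h1 h2
    have hge : k ≤ kidx n := Nat.le_findGreatest (by have := hPk k; omega) h1
    have hle : kidx n ≤ k := by
      by_contra hcon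
      push_neg at hcon
      have := hmono (show k + 1 ≤ kidx n by omega)
      have := hk1 n
      omega
    omega
  set ρ : ℕ → Q := fun n => f (kidx n) (n - P (kidx n)) with hρ
  have rho_at : ∀ k j, j < (B k).length → ρ (P k + j) = f k j := by
    intro k j hj
    have : kidx (P k + j) = k := kidx_eq _ _ (Nat.le_add_right _ _) (by rw [hPsucc]; omega)
    simp [hρ, this]
  have fb : ∀ k, f (k + 1) 0 = f k (B k).length := by
    intro k; rw [hf0, hflen]
  refine ⟨ρ, ?_, ?_, ?_⟩
  · -- initial
    rcases Nat.eq_zero_or_pos (B 0).length with h0 | h0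
    · have hB0 : B 0 = [] := List.length_eq_zero_iff.mp h0
      have hτ : τ 0 = τ 1 := by have := hreach 0; rw [hB0] at this; exact this
      have hP1 : P 1 = 0 := by rw [hPsucc, hP0, h0]
      have : ρ (P 1 + 0) = f 1 0 := rho_at 1 0 (hlenpos 0)
      rw [hP1] at this
      simpa [this, hf0, ← hτ] using hI
    · have : ρ (P 0 + 0) = f 0 0 := rho_at 0 0 h0
      rw [hP0] at this
      simpa [this, hf0] using hI
  · -- step
    intro n
    set k := kidx n with hk
    set j := n - P k with hj
    have h1 : P k ≤ n := hk1 n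
    have h2 : n < P (k + 1) := hk2 n
    have hn : n = P k + j := by omega
    have hjlt : j < (B k).length := by have := hPsucc k; omega
    have hρn : ρ n = f k j := by rw [hn]; exact rho_at k j hjlt
    have hwn : w n = (B k)[j] := by rw [hn]; exact hw k j hjlt
    rcases Nat.lt_or_ge (j + 1) (B k).length with hlt | hge
    · have : ρ (n + 1) = f k (j + 1) := by
        have := rho_at k (j + 1) hlt
        rw [hn, Nat.add_assoc]; exact this
      rw [this, hρn, hwn]
      exact hfstep k j hjlt
    · have hje : j + 1 = (B k).length := by omega
      have hn1 : n + 1 = P (k + 1) + 0 := by rw [hPsucc]; omega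
      have : ρ (n + 1) = f (k + 1) 0 := by rw [hn1]; exact rho_at (k + 1) 0 (hlenpos k)
      rw [this, fb, ← hje, hρn, hwn]
      exact hfstep k j hjlt
  · -- acceptance
    intro N
    obtain ⟨k, hkN, hkF⟩ := hF (N + 1)
    obtain ⟨j, hjle, hjF⟩ := hfF k hkF
    have hPkN : N ≤ P k := by
      have := hPk k
      have := hmono hkN
      have : P (N + 1) ≤ P k := hmono hkN
      have := hPk (N + 1)
      have h1 : 0 < (B (N + 1)).length := hlenpos N
      -- N + 1 ≤ P (N+1) + 1 so N ≤ P (N+1) ≤ P k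
      omega
    rcases Nat.lt_or_ge j (B k).length with hlt | hge
    · refine ⟨P k + j, by omega, ?_⟩
      rw [rho_at k j hlt]; exact hjF
    · have hje : j = (B k).length := by omega
      refine ⟨P (k + 1) + 0, by have := hmono (show k ≤ k + 1 by omega); omega, ?_⟩
      rw [rho_at (k + 1) 0 (hlenpos k), fb, ← hje]
      exact hjF

end NBW
namespace NBW
variable {α Q : Type}

theorem blocks_of_accepts (A : NBW α Q) (w : ℕ → α) (B : ℕ → List α)
    (hne : ∀ k, 1 ≤ k → B k ≠ [])
    (hw : ∀ k j, (hj : j < (B k).length) →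
        w ((((List.range k).map B).flatten).length + j) = (B k)[j])
    (hacc : A.AcceptsOmega w) :
    ∃ τ : ℕ → Q, τ 0 ∈ A.I ∧ (∀ k, A.Reach (τ k) (B k) (τ (k + 1))) ∧
      ∀ K, ∃ k, K ≤ k ∧ A.FReach (τ k) (B k) (τ (k + 1)) := by
  classical
  obtain ⟨ρ, hρI, hρstep, hρF⟩ := hacc
  set P : ℕ → ℕ := fun k => (((List.range k).map B).flatten).length with hP
  have hP0 : P 0 = 0 := by simp [hP]
  have hPsucc : ∀ k, P (k + 1) = P k + (B k).length := by
    intro k; simp [hP, List.range_succ]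
  have hlenpos : ∀ k, 0 < (B (k + 1)).length := fun k =>
    List.length_pos_iff.mpr (hne (k + 1) (Nat.le_add_left 1 k))
  have hmono : Monotone P := monotone_nat_of_le_succ (fun k => by rw [hPsucc]; omega)
  have hPk : ∀ k, k ≤ P k + 1 := by
    intro k
    induction k with
    | zero => omega
    | succ k ih =>
      have := hPsucc k
      rcases Nat.eq_zero_or_pos k with rfl | hk
      · have := hlenpos 0; have := hPsucc 0; omega
      · have : 0 < (B k).length := List.length_pos_iff.mpr (hne k hk)
        omega
  refine ⟨fun k => ρ (P k), by show ρ (P 0) ∈ A.I; rw [hP0]; exact hρI, ?_, ?_⟩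
  · intro k
    have := A.run_reach w ρ hρstep (B k) (P k) (hw k)
    rwa [← hPsucc] at this
  · intro K
    obtain ⟨n, hn, hnF⟩ := hρF (P (K + 1))
    set k : ℕ := Nat.findGreatest (fun k => P k ≤ n) (n + 1) with hk
    have hk1 : P k ≤ n :=
      Nat.findGreatest_spec (P := fun k => P k ≤ n) (Nat.zero_le _) (show P 0 ≤ n by omega)
    have hk2 : n < P (k + 1) := by
      by_contra hcon
      push_neg at hcon
      exact Nat.findGreatest_is_greatest (P := fun k => P k ≤ n) (n := n + 1)
        (Nat.lt_succ_self _)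
        (by have he : Nat.findGreatest (fun k => P k ≤ n) (n + 1) = k := rfl
            rw [he]; have := hPk (k + 1); omega) hcon
    have hkK : K + 1 ≤ k :=
      Nat.le_findGreatest (by have := hPk (K + 1); omega) hn
    refine ⟨k, by omega, ?_⟩
    have := A.run_freach w ρ hρstep (B k) (P k) (hw k)
      ⟨n - P k, by have := hPsucc k; omega, by
        have : P k + (n - P k) = n := by omega
        rw [this]; exact hnF⟩
    rwa [← hPsucc] at this

end NBW

/-- The block sequence of the decomposition `u₀ v₀ v₁ ⋯`. -/
def blocksOf {α : Type} (u₀ : List α) (vs : ℕ → List α) : ℕ → List α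
  | 0 => u₀
  | k + 1 => vs k

theorem blocksOf_flatten {α : Type} (u₀ : List α) (vs : ℕ → List α) (k : ℕ) :
    ((List.range (k + 1)).map (blocksOf u₀ vs)).flatten =
      u₀ ++ ((List.range k).map vs).flatten := by
  induction k with
  | zero => simp [List.range_succ, blocksOf]
  | succ k ih =>
    rw [List.range_succ, List.map_append, List.flatten_append, ih,
      List.range_succ (n := k), List.map_append, List.flatten_append]
    simp [blocksOf, List.append_assoc]

theorem letters_of_prefixes {α : Type} (w : ℕ → α) (u₀ : List α) (vs : ℕ → List α)
    (hpre : ∀ k : ℕ,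
      u₀ ++ ((List.range k).map vs).flatten =
        List.ofFn fun i : Fin (u₀ ++ ((List.range k).map vs).flatten).length => w i.1) :
    ∀ k j, (hj : j < (blocksOf u₀ vs k).length) →
      w ((((List.range k).map (blocksOf u₀ vs)).flatten).length + j)
        = (blocksOf u₀ vs k)[j] := by
  intro k j hj
  set B := blocksOf u₀ vs with hB
  have hsplit : ((List.range (k + 1)).map B).flatten =
      ((List.range k).map B).flatten ++ B k := by
    rw [List.range_succ, List.map_append, List.flatten_append]; simp
  set n := (((List.range k).map B).flatten).length + j with hn
  have hlt : n < (((List.range (k + 1)).map B).flatten).length := by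
    rw [hsplit, List.length_append]; omega
  have heq := blocksOf_flatten u₀ vs k
  rw [← hB] at heq
  have hpk := hpre k
  have hlt' : n < (u₀ ++ ((List.range k).map vs).flatten).length := by
    rw [← heq]; exact hlt
  have hsome := congrArg (fun l => l[n]?) hpk
  rw [List.getElem?_eq_getElem hlt'] at hsome
  have hrhs : (List.ofFn fun i : Fin (u₀ ++ ((List.range k).map vs).flatten).length =>
      w i.1)[n]? = some (w n) := by
    rw [List.getElem?_eq_getElem (by simpa using hlt')]
    simp
  rw [hrhs] at hsome
  have hL : (u₀ ++ ((List.range k).map vs).flatten)[n] = (B k)[j] := by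
    rw [List.getElem_of_eq heq.symm hlt', List.getElem_of_eq hsplit hlt,
      List.getElem_append_right (by omega)]
    congr 1
    omega
  rw [hL] at hsome
  exact (Option.some.inj hsome).symm
/-- if `uv ∼ⁱ u` then `[u]_{∼ⁱ}[v]_{≈ᵤ}^ω` is either disjoint from
`L(A)` or contained in `L(A)`. -/
theorem iEq_saturation {α Q : Type} [Fintype Q] (A : NBW α Q) (u v : List α)
    (hv : v ≠ []) (h : A.iEq (u ++ v) u) :
    OmegaLang (A.iClass u) (A.proClass u v) ∩ A.L = ∅ ∨
      OmegaLang (A.iClass u) (A.proClass u v) ⊆ A.L := by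
  classical
  rcases Set.eq_empty_or_nonempty (OmegaLang (A.iClass u) (A.proClass u v) ∩ A.L) with
    he | ⟨w, hwΩ, hwL⟩
  · exact Or.inl he
  · right
    obtain ⟨u₀, hu₀, vs, hvs, hpre⟩ := hwΩ
    have hne : ∀ k, 1 ≤ k → blocksOf u₀ vs k ≠ [] := by
      intro k hk
      match k, hk with
      | k + 1, _ => exact (hvs k).1
    obtain ⟨τ, hτI, hreach, hFinf⟩ :=
      A.blocks_of_accepts w (blocksOf u₀ vs) hne (letters_of_prefixes w u₀ vs hpre) hwL
    have hu₀eq : A.δSet A.I u = A.δSet A.I u₀ := hu₀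
    have key1 : ∀ k, τ (k + 1) ∈ A.δSet A.I u := by
      intro k
      induction k with
      | zero =>
        rw [hu₀eq]
        exact (A.mem_δSet_iff _ _ _).mpr ⟨τ 0, hτI, hreach 0⟩
      | succ k ih =>
        have hreachv : A.Reach (τ (k + 1)) v (τ (k + 2)) :=
          ((hvs k).2 (τ (k + 1)) ih (τ (k + 2))).1.mpr (hreach (k + 1))
        have hmem : τ (k + 2) ∈ A.δSet A.I (u ++ v) := by
          rw [A.δSet_append]
          exact (A.mem_δSet_iff _ _ _).mpr ⟨τ (k + 1), ih, hreachv⟩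
        rwa [h] at hmem
    have reach_v : ∀ k, A.Reach (τ (k + 1)) v (τ (k + 2)) := fun k =>
      ((hvs k).2 (τ (k + 1)) (key1 k) (τ (k + 2))).1.mpr (hreach (k + 1))
    have hFv : ∀ K, ∃ k, K ≤ k ∧ A.FReach (τ (k + 1)) v (τ (k + 2)) := by
      intro K
      obtain ⟨k', hk', hF'⟩ := hFinf (K + 1)
      match k', hk', hF' with
      | k + 1, hk', hF' =>
        exact ⟨k, by omega, ((hvs k).2 (τ (k + 1)) (key1 k) (τ (k + 2))).2.mpr hF'⟩
    intro w' hw'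
    obtain ⟨u₀', hu₀'mem, vs', hvs', hpre'⟩ := hw'
    have hiu' : A.δSet A.I u = A.δSet A.I u₀' := hu₀'mem
    have hτ1 : τ 1 ∈ A.δSet A.I u₀' := by rw [← hiu']; exact key1 0
    obtain ⟨q₀, hq₀, hq₀r⟩ := (A.mem_δSet_iff _ _ _).mp hτ1
    show A.AcceptsOmega w'
    refine A.accepts_of_blocks w' (blocksOf u₀' vs')
      (fun k => match k with | 0 => q₀ | k + 1 => τ (k + 1)) ?_ hq₀ ?_ ?_
      (letters_of_prefixes w' u₀' vs' hpre')
    · intro k hk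
      match k, hk with
      | k + 1, _ => exact (hvs' k).1
    · intro k
      match k with
      | 0 => exact hq₀r
      | k + 1 => exact ((hvs' k).2 (τ (k + 1)) (key1 k) (τ (k + 2))).1.mp (reach_v k)
    · intro K
      obtain ⟨k, hk, hF⟩ := hFv K
      exact ⟨k + 1, by omega, ((hvs' k).2 (τ (k + 1)) (key1 k) (τ (k + 2))).2.mp hF⟩
end

section
/- Let A be an NBW over an alphabet Σ. Every ω-word w ∈ Σ^ω belongs to [u]_{∼ⁱ}[v]_{≈ᵤ}^ω for some u ∈ Σ* and nonempty v ∈ Σ⁺ with uv ∼ⁱ u; that is, Σ^ω = ⋃ { [u]_{∼ⁱ}[v]_{≈ᵤ}^ω : u ∈ Σ*, v ∈ Σ⁺, uv ∼ⁱ u }. -/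
open scoped Classical

private lemma aux_infinite_fiber {C : Type} [Finite C] {S : Set ℕ} (hS : S.Infinite)
    (f : ℕ → C) : ∃ e, {x ∈ S | f x = e}.Infinite := by
  by_contra h
  push_neg at h
  have hsub : S ⊆ ⋃ e : C, {x ∈ S | f x = e} :=
    fun x hx => Set.mem_iUnion.2 ⟨f x, hx, rfl⟩
  exact hS ((Set.finite_iUnion h).subset hsub)

/-- Infinite Ramsey theorem for pairs. -/
private lemma aux_ramsey {C : Type} [Finite C] [Nonempty C] (c : ℕ → ℕ → C) :
    ∃ (g : ℕ → ℕ) (e : C), StrictMono g ∧ ∀ i j, i < j → c (g i) (g j) = e := by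
  classical
  have key : ∀ S : Set ℕ, S.Infinite → ∃ T : Set ℕ, T.Infinite ∧ T ⊆ S ∧
      (∀ x ∈ T, sInf S < x) ∧ ∀ x ∈ T, ∀ y ∈ T, c (sInf S) x = c (sInf S) y := by
    intro S hS
    obtain ⟨e, he⟩ := aux_infinite_fiber (hS.diff (Set.finite_Iic (sInf S))) (c (sInf S))
    refine ⟨_, he, fun x hx => hx.1.1, fun x hx => ?_, fun x hx y hy => hx.2.trans hy.2.symm⟩
    have := hx.1.2
    simp only [Set.mem_Iic, not_le] at this
    exact this
  choose T hT1 hT2 hT3 hT4 using key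
  let P : ℕ → {S : Set ℕ // S.Infinite} := fun n =>
    Nat.rec ⟨Set.univ, Set.infinite_univ⟩ (fun _ p => ⟨T p.1 p.2, hT1 p.1 p.2⟩) n
  have hPsucc : ∀ n, (P (n + 1)).1 = T (P n).1 (P n).2 := fun n => rfl
  set a : ℕ → ℕ := fun n => sInf (P n).1 with ha
  have hmem : ∀ n, a n ∈ (P n).1 := fun n => Nat.sInf_mem (P n).2.nonempty
  have hstep : ∀ n, a n < a (n + 1) := by
    intro n
    have := hmem (n + 1)
    rw [hPsucc] at this
    exact hT3 _ _ _ this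
  have hamono : StrictMono a := strictMono_nat_of_lt_succ hstep
  have hchain : ∀ j k, j < k → (P k).1 ⊆ (P (j + 1)).1 := by
    intro j k hjk
    induction k with
    | zero => omega
    | succ m ih =>
      rcases Nat.lt_or_ge j m with h | h
      · refine (fun x hx => ih h ?_)
        rw [hPsucc] at hx
        exact hT2 _ _ hx
      · have : j = m := by omega
        subst this
        exact fun x hx => hx
  set e' : ℕ → C := fun k => c (a k) (a (k + 1)) with he'
  have hpair : ∀ j k, j < k → c (a j) (a k) = e' j := by
    intro j k hjk
    have h1 : a k ∈ (P (j + 1)).1 := hchain j k hjk (hmem k)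
    have h2 : a (j + 1) ∈ (P (j + 1)).1 := hmem (j + 1)
    rw [hPsucc] at h1 h2
    exact hT4 _ _ _ h1 _ h2
  obtain ⟨estar, hinf⟩ := aux_infinite_fiber (Set.infinite_univ (α := ℕ)) e'
  have hex : ∀ n : ℕ, ∃ m, n < m ∧ e' m = estar := by
    intro n
    obtain ⟨m, hm, hlt⟩ := hinf.exists_gt n
    exact ⟨m, hlt, hm.2⟩
  choose nxt hnxt1 hnxt2 using hex
  let h : ℕ → ℕ := fun n => Nat.rec (nxt 0) (fun _ p => nxt p) n
  have hhmono : StrictMono h := strictMono_nat_of_lt_succ (fun n => hnxt1 (h n))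
  have hhe : ∀ n, e' (h n) = estar := by
    intro n
    cases n with
    | zero => exact hnxt2 0
    | succ m => exact hnxt2 (h m)
  refine ⟨a ∘ h, estar, hamono.comp hhmono, fun i j hij => ?_⟩
  have := hpair (h i) (h j) (hhmono hij)
  simp only [Function.comp]
  rw [this, hhe]

/-- `Σ^ω = ⋃ { [u]_{∼ⁱ}[v]_{≈ᵤ}^ω : u ∈ Σ*, v ∈ Σ⁺, uv ∼ⁱ u }`. -/
theorem omega_covered_iEq {α Q : Type} [Fintype Q] (A : NBW α Q) (w : ℕ → α) :
    ∃ u v : List α, v ≠ [] ∧ A.iEq (u ++ v) u ∧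
      w ∈ OmegaLang (A.iClass u) (A.proClass u v) := by
  classical
  set pref : ℕ → List α := fun n => List.ofFn fun i : Fin n => w i.1 with hpref
  set seg : ℕ → ℕ → List α := fun i j => List.ofFn fun t : Fin (j - i) => w (i + t.1) with hseg
  have pref_seg : ∀ i j, i ≤ j → pref i ++ seg i j = pref j := by
    intro i j hij
    apply List.ext_getElem
    · simp [hpref, hseg]; omega
    · intro t h1 h2
      simp only [hpref, hseg, List.length_ofFn, List.getElem_append, List.getElem_ofFn] at *
      split
      · rfl
      · congr 1; omega
  have ofFn_len : ∀ L : List α, (∀ t (h : t < L.length), L[t] = w t) →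
      L = List.ofFn fun i : Fin L.length => w i.1 := by
    intro L hL
    apply List.ext_getElem
    · simp
    · intro t h1 h2
      simp only [List.getElem_ofFn]
      exact hL t h1
  have pref_get : ∀ n t (h : t < (pref n).length), (pref n)[t] = w t := by
    intro n t h
    simp [hpref]
  -- the Ramsey coloring
  set c : ℕ → ℕ → (Set Q × ((Q × Q → Prop) × (Q × Q → Prop))) := fun i j =>
    (A.δSet A.I (pref i),
      (fun p : Q × Q => A.Reach p.1 (seg i j) p.2,
       fun p : Q × Q => A.FReach p.1 (seg i j) p.2)) with hc
  obtain ⟨g, e, hg, hmono⟩ := aux_ramsey c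
  have hglt : ∀ k, g k < g (k + 1) := fun k => hg (Nat.lt_succ_self k)
  have hne : ∀ k, seg (g k) (g (k + 1)) ≠ [] := by
    intro k h
    have := congrArg List.length h
    simp only [hseg, List.length_ofFn, List.length_nil] at this
    have := hglt k
    omega
  refine ⟨pref (g 0), seg (g 0) (g 1), hne 0, ?_, ?_⟩
  · -- iEq (pref (g 0) ++ seg (g 0) (g 1)) (pref (g 0))
    rw [pref_seg _ _ (hglt 0).le]
    have h01 := hmono 0 1 (by omega)
    have h12 := hmono 1 2 (by omega)
    have := congrArg Prod.fst (h12.trans h01.symm)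
    simpa [NBW.iEq, hc] using this
  · refine ⟨pref (g 0), by simp [NBW.iClass, NBW.iEq], fun k => seg (g k) (g (k + 1)),
      fun i => ⟨hne i, ?_⟩, ?_⟩
    · -- proClass membership
      have h0 := hmono 0 1 (by omega)
      have hi := hmono i (i + 1) (by omega)
      have heq := h0.trans hi.symm
      have hR := congrArg (fun x => x.2.1) heq
      have hF := congrArg (fun x => x.2.2) heq
      intro q _ r
      constructor
      · exact iff_of_eq (congrFun hR (q, r))
      · exact iff_of_eq (congrFun hF (q, r))
    · -- prefix condition
      intro k
      have htele : ∀ k, pref (g 0) ++ ((List.range k).map fun i => seg (g i) (g (i + 1))).flatten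
          = pref (g k) := by
        intro k
        induction k with
        | zero => simp
        | succ m ih =>
          rw [List.range_succ, List.map_append, List.flatten_append, ← List.append_assoc, ih]
          simp only [List.map_cons, List.map_nil, List.flatten_cons, List.flatten_nil,
            List.append_nil]
          exact pref_seg _ _ (hglt m).le
      rw [htele k]
      exact ofFn_len _ (pref_get (g k))
end

section
/- Let A be an NBW over an alphabet Σ. For every ω-word w ∈ Σ^ω: w ∉ L(A) if and only if there exist u ∈ Σ* and nonempty v ∈ Σ⁺ with uv ∼ⁱ u, w ∈ [u]_{∼ⁱ}[v]_{≈ᵤ}^ω, and [u]_{∼ⁱ}[v]_{≈ᵤ}^ω ∩ L(A) = ∅. Equivalently, Σ^ω ∖ L(A) = ⋃ { [u]_{∼ⁱ}[v]_{≈ᵤ}^ω : u ∈ Σ*, v ∈ Σ⁺, uv ∼ⁱ u, [u]_{∼ⁱ}[v]_{≈ᵤ}^ω ∩ L(A) = ∅ }. -/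
open scoped Classical

namespace BuchiAux

open NBW

variable {α Q : Type}

/-! ### Basic lemmas about `δSet`, `Reach`, `FReach` -/

lemma mem_δStep {A : NBW α Q} {S : Set Q} {a : α} {r : Q} :
    r ∈ A.δStep S a ↔ ∃ q ∈ S, r ∈ A.δ q a := by
  simp [NBW.δStep]

lemma δSet_nil (A : NBW α Q) (S : Set Q) : A.δSet S [] = S := rfl

lemma δSet_cons (A : NBW α Q) (S : Set Q) (a : α) (u : List α) :
    A.δSet S (a :: u) = A.δSet (A.δStep S a) u := rfl

lemma δSet_append (A : NBW α Q) (S : Set Q) (x y : List α) :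
    A.δSet S (x ++ y) = A.δSet (A.δSet S x) y := by
  simp [NBW.δSet, List.foldl_append]

lemma mem_δSet {A : NBW α Q} {S : Set Q} {u : List α} {r : Q} :
    r ∈ A.δSet S u ↔ ∃ q ∈ S, A.Reach q u r := by
  induction u generalizing S with
  | nil =>
    constructor
    · exact fun h => ⟨r, h, rfl⟩
    · rintro ⟨q, hq, h⟩; cases h; exact hq
  | cons a u ih =>
    rw [δSet_cons, ih]
    constructor
    · rintro ⟨p, hp, hr⟩
      rcases mem_δStep.1 hp with ⟨q, hq, hpq⟩
      exact ⟨q, hq, p, hpq, hr⟩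
    · rintro ⟨q, hq, p, hpq, hr⟩
      exact ⟨p, mem_δStep.2 ⟨q, hq, hpq⟩, hr⟩

lemma freach_of_mem_F {A : NBW α Q} {q r : Q} {u : List α}
    (hF : q ∈ A.F) (h : A.Reach q u r) : A.FReach q u r := by
  cases u with
  | nil => exact ⟨h, hF⟩
  | cons a u => exact Or.inl ⟨hF, h⟩

/-! ### Finite runs and `Reach`/`FReach` -/

lemma reach_run {A : NBW α Q} {q r : Q} {u : List α} (h : A.Reach q u r) :
    ∃ f : ℕ → Q, f 0 = q ∧ f u.length = r ∧
      ∀ i (hi : i < u.length), f (i + 1) ∈ A.δ (f i) u[i] := by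
  induction u generalizing q with
  | nil =>
    exact ⟨fun _ => q, rfl, h, fun i hi => absurd hi (by simp)⟩
  | cons a u ih =>
    rcases h with ⟨p, hp, hr⟩
    obtain ⟨f, hf0, hfl, hfs⟩ := ih hr
    refine ⟨fun i => if i = 0 then q else f (i - 1), by simp, by simp [hfl], ?_⟩
    intro i hi
    cases i with
    | zero => simpa [hf0] using hp
    | succ i =>
      simpa using hfs i (by simpa using hi)

lemma freach_run {A : NBW α Q} {q r : Q} {u : List α} (h : A.FReach q u r) :
    ∃ f : ℕ → Q, f 0 = q ∧ f u.length = r ∧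
      (∀ i (hi : i < u.length), f (i + 1) ∈ A.δ (f i) u[i]) ∧
      ∃ j ≤ u.length, f j ∈ A.F := by
  induction u generalizing q with
  | nil =>
    rcases h with ⟨rfl, hF⟩
    exact ⟨fun _ => q, rfl, rfl, fun i hi => absurd hi (by simp), 0, le_refl _, hF⟩
  | cons a u ih =>
    rcases h with ⟨hF, p, hp, hr⟩ | ⟨p, hp, hr⟩
    · obtain ⟨f, hf0, hfl, hfs⟩ := reach_run hr
      refine ⟨fun i => if i = 0 then q else f (i - 1), by simp, by simp [hfl], ?_, 0, by simp, by simpa⟩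
      intro i hi
      cases i with
      | zero => simpa [hf0] using hp
      | succ i => simpa using hfs i (by simpa using hi)
    · obtain ⟨f, hf0, hfl, hfs, j, hj, hjF⟩ := ih hr
      refine ⟨fun i => if i = 0 then q else f (i - 1), by simp, by simp [hfl], ?_, j + 1, by simpa using hj, by simpa using hjF⟩
      intro i hi
      cases i with
      | zero => simpa [hf0] using hp
      | succ i => simpa using hfs i (by simpa using hi)

lemma run_reach {A : NBW α Q} {u : List α} {f : ℕ → Q}
    (hsteps : ∀ i (hi : i < u.length), f (i + 1) ∈ A.δ (f i) u[i]) :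
    A.Reach (f 0) u (f u.length) := by
  induction u generalizing f with
  | nil => rfl
  | cons a u ih =>
    refine ⟨f 1, by exact hsteps 0 (by simp), ?_⟩
    have := ih (f := fun i => f (i + 1)) (fun i hi => by exact hsteps (i + 1) (by simpa using hi))
    simpa [Nat.succ_eq_add_one, Nat.add_comm] using this

lemma run_freach {A : NBW α Q} {u : List α} {f : ℕ → Q}
    (hsteps : ∀ i (hi : i < u.length), f (i + 1) ∈ A.δ (f i) u[i])
    {j : ℕ} (hj : j ≤ u.length) (hjF : f j ∈ A.F) :
    A.FReach (f 0) u (f u.length) := by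
  induction u generalizing f j with
  | nil =>
    obtain rfl : j = 0 := Nat.le_zero.mp (by simpa using hj)
    exact ⟨rfl, hjF⟩
  | cons a u ih =>
    cases j with
    | zero =>
      refine Or.inl ⟨hjF, f 1, by exact hsteps 0 (by simp), ?_⟩
      have := run_reach (A := A) (u := u) (f := fun i => f (i + 1))
        (fun i hi => by exact hsteps (i + 1) (by simpa using hi))
      simpa [Nat.add_comm] using this
    | succ j =>
      refine Or.inr ⟨f 1, by exact hsteps 0 (by simp), ?_⟩
      have := ih (f := fun i => f (i + 1))
        (fun i hi => by exact hsteps (i + 1) (by simpa using hi))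
        (j := j) (by simpa using hj) (by simpa using hjF)
      simpa [Nat.add_comm] using this

end BuchiAux
namespace BuchiAux

/-! ### Segments of ω-words -/

/-- The finite segment `w[a..b)` of an ω-word. -/
def seg (w : ℕ → α) (a b : ℕ) : List α := (List.range (b - a)).map fun i => w (a + i)

@[simp] lemma seg_length (w : ℕ → α) (a b : ℕ) : (seg w a b).length = b - a := by
  simp [seg]

lemma seg_getElem (w : ℕ → α) (a b i : ℕ) (hi : i < (seg w a b).length) :
    (seg w a b)[i] = w (a + i) := by
  simp [seg]

lemma seg_self (w : ℕ → α) (a : ℕ) : seg w a a = [] := by simp [seg]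

lemma seg_append (w : ℕ → α) {a b c : ℕ} (hab : a ≤ b) (hbc : b ≤ c) :
    seg w a b ++ seg w b c = seg w a c := by
  apply List.ext_getElem
  · simp; omega
  · intro i h1 h2
    rcases Nat.lt_or_ge i (b - a) with h | h
    · rw [List.getElem_append_left (by simpa using h)]
      rw [seg_getElem, seg_getElem]
    · rw [List.getElem_append_right (by simpa using h)]
      rw [seg_getElem, seg_getElem]
      congr 1
      simp
      omega

lemma seg_zero_ofFn (w : ℕ → α) (n : ℕ) :
    List.ofFn (fun i : Fin n => w i.1) = seg w 0 n := by
  apply List.ext_getElem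
  · simp
  · intro i h1 h2
    rw [List.getElem_ofFn, seg_getElem]
    simp

lemma seg_eq_ofFn (w : ℕ → α) (n : ℕ) :
    seg w 0 n = List.ofFn fun i : Fin (seg w 0 n).length => w i.1 := by
  apply List.ext_getElem (by simp)
  intro i h1 h2
  rw [List.getElem_ofFn, seg_getElem]
  simp

/-! ### Runs over segments -/

variable {Q : Type}

lemma run_reach_seg {A : NBW α Q} {w : ℕ → α} {f : ℕ → Q} {a b : ℕ} (hab : a ≤ b)
    (hsteps : ∀ i, a ≤ i → i < b → f (i + 1) ∈ A.δ (f i) (w i)) :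
    A.Reach (f a) (seg w a b) (f b) := by
  have := run_reach (A := A) (u := seg w a b) (f := fun i => f (a + i)) ?_
  · simpa [show a + (b - a) = b by omega] using this
  · intro i hi
    simp only [seg_length] at hi
    rw [seg_getElem]
    have := hsteps (a + i) (by omega) (by omega)
    simpa [Nat.add_assoc] using this

lemma run_freach_seg {A : NBW α Q} {w : ℕ → α} {f : ℕ → Q} {a b : ℕ} (hab : a ≤ b)
    (hsteps : ∀ i, a ≤ i → i < b → f (i + 1) ∈ A.δ (f i) (w i))
    {j : ℕ} (haj : a ≤ j) (hjb : j ≤ b) (hjF : f j ∈ A.F) :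
    A.FReach (f a) (seg w a b) (f b) := by
  have := run_freach (A := A) (u := seg w a b) (f := fun i => f (a + i)) ?_
    (j := j - a) (by simp; omega) (by simpa [show a + (j - a) = j by omega] using hjF)
  · simpa [show a + (b - a) = b by omega] using this
  · intro i hi
    simp only [seg_length] at hi
    rw [seg_getElem]
    have := hsteps (a + i) (by omega) (by omega)
    simpa [Nat.add_assoc] using this

lemma reach_run_seg {A : NBW α Q} {w : ℕ → α} {q r : Q} {a b : ℕ} (hab : a ≤ b)
    (h : A.Reach q (seg w a b) r) :
    ∃ f : ℕ → Q, f a = q ∧ f b = r ∧ ∀ i, a ≤ i → i < b → f (i + 1) ∈ A.δ (f i) (w i) := by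
  obtain ⟨f, hf0, hfl, hfs⟩ := reach_run h
  refine ⟨fun i => f (i - a), by simpa using hf0, by simpa using hfl, ?_⟩
  intro i hai hib
  have := hfs (i - a) (by simp; omega)
  rw [seg_getElem] at this
  simpa [show a + (i - a) = i by omega, show i + 1 - a = i - a + 1 by omega] using this

lemma freach_run_seg {A : NBW α Q} {w : ℕ → α} {q r : Q} {a b : ℕ} (hab : a ≤ b)
    (h : A.FReach q (seg w a b) r) :
    ∃ f : ℕ → Q, f a = q ∧ f b = r ∧ (∀ i, a ≤ i → i < b → f (i + 1) ∈ A.δ (f i) (w i)) ∧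
      ∃ j, a ≤ j ∧ j ≤ b ∧ f j ∈ A.F := by
  obtain ⟨f, hf0, hfl, hfs, j, hj, hjF⟩ := freach_run h
  refine ⟨fun i => f (i - a), by simpa using hf0, by simpa using hfl, ?_, a + j, by omega, by simp at hj; omega, by simpa using hjF⟩
  intro i hai hib
  have := hfs (i - a) (by simp; omega)
  rw [seg_getElem] at this
  simpa [show a + (i - a) = i by omega, show i + 1 - a = i - a + 1 by omega] using this

/-! ### The boundary-index function -/

/-- The index of the boundary interval containing `i`: the greatest `k` with `b k ≤ i`. -/
noncomputable def bIdx (b : ℕ → ℕ) (i : ℕ) : ℕ := Nat.findGreatest (fun k => b k ≤ i) (i + 2)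

section bIdx

variable {b : ℕ → ℕ} (hb0 : b 0 = 0) (hmono : ∀ k, b k ≤ b (k + 1))
  (hstrict : ∀ k, b (k + 1) < b (k + 2))

include hmono in
lemma b_mono : ∀ {m n : ℕ}, m ≤ n → b m ≤ b n := fun {m n} h =>
  monotone_nat_of_le_succ hmono h

include hstrict in
lemma b_lb : ∀ k, k ≤ b (k + 1) := by
  intro k
  induction k with
  | zero => omega
  | succ k ih =>
    have h : b (k + 1) < b (k + 2) := hstrict k
    have : k + 1 ≤ b (k + 2) := by omega
    exact this

include hb0 in
lemma bIdx_le (i : ℕ) : b (bIdx b i) ≤ i := by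
  have h := Nat.findGreatest_spec (P := fun k => b k ≤ i) (n := i + 2) (m := 0)
    (by omega) (by simp [hb0])
  exact h

include hb0 hmono hstrict in
lemma bIdx_lt (i : ℕ) : i < b (bIdx b i + 1) := by
  by_contra hcon
  push_neg at hcon
  have hle : bIdx b i ≤ i + 2 := Nat.findGreatest_le _
  rcases Nat.lt_or_ge (bIdx b i + 1) (i + 3) with h | h
  · have h2 : bIdx b i + 1 ≤ Nat.findGreatest (fun k => b k ≤ i) (i + 2) :=
      Nat.le_findGreatest (by omega) hcon
    have h3 : Nat.findGreatest (fun k => b k ≤ i) (i + 2) = bIdx b i := rfl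
    omega
  · have h1 : bIdx b i = i + 2 := by omega
    have h2 := bIdx_le hb0 (b := b) i
    rw [h1] at h2
    have h3 : i + 1 ≤ b (i + 2) := b_lb hstrict (i + 1)
    omega

include hb0 hmono hstrict in
lemma bIdx_eq {i k : ℕ} (h1 : b k ≤ i) (h2 : i < b (k + 1)) : bIdx b i = k := by
  have hk2 : k ≤ i + 2 := by
    cases k with
    | zero => omega
    | succ k =>
      have : k ≤ b (k + 1) := b_lb hstrict k
      omega
  have hge : k ≤ bIdx b i :=
    Nat.le_findGreatest (P := fun k => b k ≤ i) hk2 h1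
  have hlt : bIdx b i < k + 1 := by
    by_contra hcon
    push_neg at hcon
    have hm : b (k + 1) ≤ b (bIdx b i) := b_mono hmono hcon
    have := bIdx_le hb0 (b := b) i
    omega
  omega

include hmono hstrict in
lemma bIdx_ge {i N : ℕ} (h : b N ≤ i) : N ≤ bIdx b i := by
  apply Nat.le_findGreatest (P := fun k => b k ≤ i) ?_ h
  cases N with
  | zero => omega
  | succ N =>
    have : N ≤ b (N + 1) := b_lb hstrict N
    omega

end bIdx

end BuchiAux
namespace BuchiAux

variable {α Q : Type}

/-- Glue finite runs over consecutive segments into an accepting infinite run. -/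
lemma glue (A : NBW α Q) (w : ℕ → α) (b : ℕ → ℕ) (s : ℕ → Q)
    (hb0 : b 0 = 0) (hmono : ∀ k, b k ≤ b (k + 1)) (hstrict : ∀ k, b (k + 1) < b (k + 2))
    (hI : s 0 ∈ A.I)
    (hreach : ∀ k, A.Reach (s k) (seg w (b k) (b (k + 1))) (s (k + 1)))
    (hfr : ∀ N, ∃ k, N ≤ k ∧ A.FReach (s k) (seg w (b k) (b (k + 1))) (s (k + 1))) :
    A.AcceptsOmega w := by
  -- choose a finite run for each segment
  have hex : ∀ k, ∃ f : ℕ → Q, f (b k) = s k ∧ f (b (k + 1)) = s (k + 1) ∧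
      (∀ i, b k ≤ i → i < b (k + 1) → f (i + 1) ∈ A.δ (f i) (w i)) ∧
      (A.FReach (s k) (seg w (b k) (b (k + 1))) (s (k + 1)) →
        ∃ j, b k ≤ j ∧ j ≤ b (k + 1) ∧ f j ∈ A.F) := by
    intro k
    by_cases hFR : A.FReach (s k) (seg w (b k) (b (k + 1))) (s (k + 1))
    · obtain ⟨f, h1, h2, h3, j, hj1, hj2, hj3⟩ := freach_run_seg (hmono k) hFR
      exact ⟨f, h1, h2, h3, fun _ => ⟨j, hj1, hj2, hj3⟩⟩
    · obtain ⟨f, h1, h2, h3⟩ := reach_run_seg (hmono k) (hreach k)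
      exact ⟨f, h1, h2, h3, fun h => absurd h hFR⟩
  choose σ hσ1 hσ2 hσ3 hσ4 using hex
  set ρ : ℕ → Q := fun i => σ (bIdx b i) i with hρ
  -- basic boundary facts
  have hJle : ∀ i, b (bIdx b i) ≤ i := bIdx_le hb0
  have hJlt : ∀ i, i < b (bIdx b i + 1) := bIdx_lt hb0 hmono hstrict
  -- value at an interior-or-left-boundary point
  have hval : ∀ k i, b k ≤ i → i < b (k + 1) → ρ i = σ k i := by
    intro k i h1 h2
    simp only [hρ]
    rw [bIdx_eq hb0 hmono hstrict h1 h2]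
  -- value at right boundary
  have hvalR : ∀ k, ρ (b (k + 1)) = σ k (b (k + 1)) := by
    intro k
    have h1 : bIdx b (b (k + 1)) = k + 1 :=
      bIdx_eq hb0 hmono hstrict (le_refl _) (hstrict k)
    simp only [hρ]
    rw [h1, hσ1 (k + 1), (hσ2 k)]
  refine ⟨ρ, ?_, ?_, ?_⟩
  · -- initial state
    have h0 : b (bIdx b 0) = 0 := Nat.le_zero.mp (hJle 0)
    have hconst : ∀ k, b k = 0 → s k = s 0 := by
      intro k
      induction k with
      | zero => intro _; rfl
      | succ k ih =>
        intro hk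
        have hbk : b k = 0 := by have := hmono k; omega
        have := hreach k
        rw [hbk, hk, seg_self] at this
        have : s k = s (k + 1) := this
        rw [← this, ih hbk]
    have : ρ 0 = s (bIdx b 0) := by
      simp only [hρ]
      have h := hσ1 (bIdx b 0)
      rw [h0] at h
      exact h
    rw [this, hconst _ h0]
    exact hI
  · -- steps
    intro i
    set k := bIdx b i with hk
    have h1 : b k ≤ i := hJle i
    have h2 : i < b (k + 1) := hJlt i
    have hstep : σ k (i + 1) ∈ A.δ (σ k i) (w i) := hσ3 k i h1 h2
    have hρi : ρ i = σ k i := hval k i h1 h2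
    rcases Nat.lt_or_ge (i + 1) (b (k + 1)) with h3 | h3
    · rw [hρi, hval k (i + 1) (by omega) h3]
      exact hstep
    · have h4 : i + 1 = b (k + 1) := by omega
      rw [hρi, h4, hvalR k, ← h4]
      exact hstep
  · -- infinitely many accepting visits
    intro N
    obtain ⟨k, hkN, hFR⟩ := hfr (N + 1)
    obtain ⟨j, hj1, hj2, hj3⟩ := hσ4 k hFR
    refine ⟨j, ?_, ?_⟩
    · -- N ≤ j
      have hk1 : 1 ≤ k := by omega
      have : k - 1 ≤ b k := by
        have := b_lb hstrict (k - 1)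
        have : k - 1 ≤ b (k - 1 + 1) := this
        rwa [show k - 1 + 1 = k by omega] at this
      omega
    · -- ρ j ∈ F
      rcases Nat.lt_or_ge j (b (k + 1)) with h3 | h3
      · rw [hval k j hj1 h3]
        exact hj3
      · have h4 : j = b (k + 1) := by omega
        rw [h4, hvalR k, ← h4]
        exact hj3

end BuchiAux
namespace BuchiAux

variable {α Q : Type}

/-- Extract segment structure from membership in `OmegaLang`. -/
lemma omega_segs {w : ℕ → α} {U V : Set (List α)} (hw : w ∈ OmegaLang U V) :
    ∃ (u₀ : List α) (vs : ℕ → List α) (b : ℕ → ℕ),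
      u₀ ∈ U ∧ (∀ k, vs k ≠ [] ∧ vs k ∈ V) ∧
      b 0 = 0 ∧ (∀ k, b k ≤ b (k + 1)) ∧ (∀ k, b (k + 1) < b (k + 2)) ∧
      seg w 0 (b 1) = u₀ ∧ (∀ k, seg w (b (k + 1)) (b (k + 2)) = vs k) := by
  obtain ⟨u₀, hu₀, vs, hvs, hpre⟩ := hw
  set pre : ℕ → List α := fun k => u₀ ++ ((List.range k).map vs).flatten with hpredef
  have hpre0 : pre 0 = u₀ := by simp [hpredef]
  have hpresucc : ∀ k, pre (k + 1) = pre k ++ vs k := by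
    intro k
    simp [hpredef, List.range_succ]
  have hseg : ∀ k, pre k = seg w 0 (pre k).length :=
    fun k => (hpre k).trans (seg_zero_ofFn w _)
  refine ⟨u₀, vs, fun k => match k with | 0 => 0 | k + 1 => (pre k).length,
    hu₀, hvs, rfl, ?_, ?_, ?_, ?_⟩
  · intro k
    cases k with
    | zero => simp
    | succ k =>
      show (pre k).length ≤ (pre (k + 1)).length
      rw [hpresucc]
      simp
  · intro k
    show (pre k).length < (pre (k + 1)).length
    rw [hpresucc]
    have : 0 < (vs k).length := List.length_pos_iff.2 (hvs k).1
    simp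
    omega
  · show seg w 0 (pre 0).length = u₀
    rw [← hseg 0, hpre0]
  · intro k
    show seg w (pre k).length (pre (k + 1)).length = vs k
    have hlen : (pre k).length ≤ (pre (k + 1)).length := by rw [hpresucc]; simp
    have h1 : seg w 0 (pre k).length ++ seg w (pre k).length (pre (k + 1)).length
        = seg w 0 (pre (k + 1)).length := seg_append w (Nat.zero_le _) hlen
    have h2 : seg w 0 (pre (k + 1)).length = seg w 0 (pre k).length ++ vs k := by
      rw [← hseg (k + 1), hpresucc k]
      congr 1
      exact hseg k
    rw [h2] at h1
    exact List.append_cancel_left h1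

/-- The key lemma: if two ω-words both lie in `[u][v]^ω` (with `uv ∼ⁱ u`) and one
of them is accepted, then so is the other. -/
lemma key {A : NBW α Q} {u v : List α} {w w' : ℕ → α}
    (hiEq : A.iEq (u ++ v) u)
    (hw : w ∈ OmegaLang (A.iClass u) (A.proClass u v))
    (hw' : w' ∈ OmegaLang (A.iClass u) (A.proClass u v))
    (hacc : w' ∈ A.L) : w ∈ A.L := by
  obtain ⟨u₀, vs, b, hu₀, hvs, hb0, hmono, hstrict, hseg0, hsegs⟩ := omega_segs hw
  obtain ⟨u₀', vs', b', hu₀', hvs', hb0', hmono', hstrict', hseg0', hsegs'⟩ := omega_segs hw'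
  obtain ⟨ρ, hρI, hρstep, hρF⟩ := hacc
  have hu₀e : A.δSet A.I u = A.δSet A.I u₀ := hu₀
  have hu₀e' : A.δSet A.I u = A.δSet A.I u₀' := hu₀'
  have hiEqe : A.δSet (A.δSet A.I u) v = A.δSet A.I u := by
    have h : A.δSet A.I (u ++ v) = A.δSet A.I u := hiEq
    rwa [δSet_append] at h
  have hpro : ∀ k, ∀ q ∈ A.δSet A.I u, ∀ r : Q,
      (A.Reach q v r ↔ A.Reach q (vs k) r) ∧ (A.FReach q v r ↔ A.FReach q (vs k) r) :=
    fun k => (hvs k).2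
  have hpro' : ∀ k, ∀ q ∈ A.δSet A.I u, ∀ r : Q,
      (A.Reach q v r ↔ A.Reach q (vs' k) r) ∧ (A.FReach q v r ↔ A.FReach q (vs' k) r) :=
    fun k => (hvs' k).2
  set q : ℕ → Q := fun k => ρ (b' (k + 1)) with hqdef
  -- the boundary states of the accepting run, transported to `δ(I, u)`
  have hq0 : q 0 ∈ A.δSet A.I u := by
    have hr : A.Reach (ρ 0) (seg w' 0 (b' 1)) (ρ (b' 1)) :=
      run_reach_seg (Nat.zero_le _) (fun i _ _ => hρstep i)
    rw [hseg0'] at hr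
    rw [hu₀e']
    exact mem_δSet.2 ⟨ρ 0, hρI, hr⟩
  have hreach' : ∀ k, A.Reach (q k) (vs' k) (q (k + 1)) := by
    intro k
    have hr : A.Reach (ρ (b' (k + 1))) (seg w' (b' (k + 1)) (b' (k + 2))) (ρ (b' (k + 2))) :=
      run_reach_seg (hmono' (k + 1)) (fun i _ _ => hρstep i)
    rwa [hsegs' k] at hr
  have hqmem : ∀ k, q k ∈ A.δSet A.I u := by
    intro k
    induction k with
    | zero => exact hq0
    | succ k ih =>
      have hvreach : A.Reach (q k) v (q (k + 1)) :=
        ((hpro' k (q k) ih (q (k + 1))).1).2 (hreach' k)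
      have : q (k + 1) ∈ A.δSet (A.δSet A.I u) v := mem_δSet.2 ⟨q k, ih, hvreach⟩
      rwa [hiEqe] at this
  have hvreach : ∀ k, A.Reach (q k) v (q (k + 1)) :=
    fun k => ((hpro' k (q k) (hqmem k) (q (k + 1))).1).2 (hreach' k)
  have hWreach : ∀ k, A.Reach (q k) (vs k) (q (k + 1)) :=
    fun k => ((hpro k (q k) (hqmem k) (q (k + 1))).1).1 (hvreach k)
  -- infinitely many accepting segments
  have hFR' : ∀ N, ∃ k, N ≤ k ∧ A.FReach (q k) (vs' k) (q (k + 1)) := by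
    intro N
    obtain ⟨i, hiN, hiF⟩ := hρF (b' (N + 1))
    have hj1 : b' (bIdx b' i) ≤ i := bIdx_le hb0' i
    have hj2 : i < b' (bIdx b' i + 1) := bIdx_lt hb0' hmono' hstrict' i
    have hjN : N + 1 ≤ bIdx b' i := bIdx_ge hmono' hstrict' hiN
    set k := bIdx b' i - 1 with hkdef
    have hjk : bIdx b' i = k + 1 := by omega
    rw [hjk] at hj1 hj2
    have hj2' : i < b' (k + 2) := hj2
    have hfr : A.FReach (ρ (b' (k + 1))) (seg w' (b' (k + 1)) (b' (k + 2))) (ρ (b' (k + 2))) :=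
      run_freach_seg (hmono' (k + 1)) (fun i _ _ => hρstep i) hj1 (le_of_lt hj2') hiF
    rw [hsegs' k] at hfr
    exact ⟨k, by omega, hfr⟩
  have hWfr : ∀ N, ∃ k, N ≤ k ∧ A.FReach (q k) (vs k) (q (k + 1)) := by
    intro N
    obtain ⟨k, hkN, hfr⟩ := hFR' N
    have h1 : A.FReach (q k) v (q (k + 1)) :=
      ((hpro' k (q k) (hqmem k) (q (k + 1))).2).2 hfr
    exact ⟨k, hkN, ((hpro k (q k) (hqmem k) (q (k + 1))).2).1 h1⟩
  -- initial run piece for w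
  have hq0' : q 0 ∈ A.δSet A.I u₀ := by rwa [← hu₀e]
  obtain ⟨qI, hqI, hreach0⟩ := mem_δSet.1 hq0'
  -- glue everything into an accepting run over w
  refine glue A w b (fun k => match k with | 0 => qI | k + 1 => q k)
    hb0 hmono hstrict hqI ?_ ?_
  · intro k
    cases k with
    | zero =>
      show A.Reach qI (seg w (b 0) (b 1)) (q 0)
      rw [hb0, hseg0]
      exact hreach0
    | succ k =>
      show A.Reach (q k) (seg w (b (k + 1)) (b (k + 2))) (q (k + 1))
      rw [hsegs k]
      exact hWreach k
  · intro N
    obtain ⟨k, hkN, hfr⟩ := hWfr N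
    refine ⟨k + 1, by omega, ?_⟩
    show A.FReach (q k) (seg w (b (k + 1)) (b (k + 2))) (q (k + 1))
    rw [hsegs k]
    exact hfr

end BuchiAux
namespace BuchiAux

/-- One step of the Ramsey construction. -/
lemma ramsey_step {C : Type} [Finite C] (c : ℕ → ℕ → C) (S : Set ℕ) (hS : S.Infinite) :
    ∃ (a : ℕ) (T : Set ℕ) (m : C), a ∈ S ∧ T ⊆ S ∧ T.Infinite ∧
      (∀ x ∈ T, a < x) ∧ ∀ x ∈ T, c a x = m := by
  obtain ⟨a, haS⟩ := hS.nonempty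
  have hS' : (S \ Set.Iic a).Infinite := hS.diff (Set.finite_Iic a)
  haveI : Infinite ↥(S \ Set.Iic a) := Set.infinite_coe_iff.2 hS'
  obtain ⟨m, hm⟩ := Finite.exists_infinite_fiber (fun x : ↥(S \ Set.Iic a) => c a x.1)
  set T : Set ℕ := Subtype.val '' ((fun x : ↥(S \ Set.Iic a) => c a x.1) ⁻¹' {m}) with hT
  refine ⟨a, T, m, haS, ?_, ?_, ?_, ?_⟩
  · rintro x ⟨y, _, rfl⟩
    exact y.2.1
  · have : ((fun x : ↥(S \ Set.Iic a) => c a x.1) ⁻¹' {m}).Infinite :=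
      Set.infinite_coe_iff.1 hm
    exact this.image (Set.injOn_of_injective Subtype.val_injective)
  · rintro x ⟨y, _, rfl⟩
    have := y.2.2
    simp [Set.mem_Iic] at this
    omega
  · rintro x ⟨y, hy, rfl⟩
    exact hy

/-- The infinite Ramsey theorem for pairs. -/
theorem ramsey_pairs {C : Type} [Finite C] (c : ℕ → ℕ → C) :
    ∃ (g : ℕ → ℕ) (m : C), StrictMono g ∧ ∀ i j, i < j → c (g i) (g j) = m := by
  choose a T m haS hTS hTinf hlt hcol using
    fun (S : {S : Set ℕ // S.Infinite}) => ramsey_step c S.1 S.2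
  set p : ℕ → {S : Set ℕ // S.Infinite} :=
    fun k => Nat.rec ⟨Set.univ, Set.infinite_univ⟩ (fun _ q => ⟨T q, hTinf q⟩) k with hp
  have hpsucc : ∀ k, (p (k + 1)).1 = T (p k) := fun k => rfl
  set aa : ℕ → ℕ := fun k => a (p k) with haa
  set mm : ℕ → C := fun k => m (p k) with hmm
  -- the sets are nested
  have hanti : ∀ i j, i ≤ j → (p j).1 ⊆ (p i).1 := by
    intro i j hij
    induction j with
    | zero =>
      obtain rfl : i = 0 := Nat.le_zero.mp hij
      exact fun x hx => hx
    | succ j ih =>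
      rcases Nat.lt_or_ge i (j + 1) with h | h
      · intro x hx
        exact ih (by omega) (hTS (p j) (by rwa [← hpsucc j]))
      · obtain rfl : i = j + 1 := by omega
        exact fun x hx => hx
  -- membership of later elements
  have hmem : ∀ i j, i < j → aa j ∈ (p (i + 1)).1 := by
    intro i j hij
    have : aa j ∈ (p j).1 := haS (p j)
    exact hanti (i + 1) j (by omega) this
  have hmono : StrictMono aa := by
    apply strictMono_nat_of_lt_succ
    intro k
    have h1 : aa (k + 1) ∈ (p (k + 1)).1 := haS (p (k + 1))
    rw [hpsucc k] at h1
    exact hlt (p k) _ h1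
  have hpair : ∀ i j, i < j → c (aa i) (aa j) = mm i := by
    intro i j hij
    have h1 : aa j ∈ (p (i + 1)).1 := hmem i j hij
    rw [hpsucc i] at h1
    exact hcol (p i) _ h1
  -- pigeonhole on the colors
  obtain ⟨mInf, hmInf⟩ := Finite.exists_infinite_fiber mm
  have hK : (mm ⁻¹' {mInf}).Infinite := Set.infinite_coe_iff.1 hmInf
  have hKset : {x | x ∈ mm ⁻¹' {mInf}}.Infinite := hK
  refine ⟨fun i => aa (Nat.nth (· ∈ mm ⁻¹' {mInf}) i), mInf, ?_, ?_⟩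
  · exact hmono.comp (Nat.nth_strictMono hKset)
  · intro i j hij
    have hnth : Nat.nth (· ∈ mm ⁻¹' {mInf}) i < Nat.nth (· ∈ mm ⁻¹' {mInf}) j :=
      Nat.nth_strictMono hKset hij
    rw [hpair _ _ hnth]
    have := Nat.nth_mem_of_infinite hKset i
    simpa using this

end BuchiAux
/-- `w ∉ L(A)` iff `w` lies in some `[u]_{∼ⁱ}[v]_{≈ᵤ}^ω` with
`uv ∼ⁱ u` that is disjoint from `L(A)`. -/
theorem complement_characterization_iEq {α Q : Type} [Fintype Q] (A : NBW α Q)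
    (w : ℕ → α) :
    w ∉ A.L ↔
      ∃ u v : List α, v ≠ [] ∧ A.iEq (u ++ v) u ∧
        w ∈ OmegaLang (A.iClass u) (A.proClass u v) ∧
        OmegaLang (A.iClass u) (A.proClass u v) ∩ A.L = ∅ := by
  constructor
  · intro hw
    -- color pairs `i < j` by the prefix state-set at `i` and the profile of `w[i..j)`
    set c : ℕ → ℕ → (Set Q × (Q → Q → Bool × Bool)) := fun i j =>
      (A.δSet A.I (BuchiAux.seg w 0 i),
        fun q r => (decide (A.Reach q (BuchiAux.seg w i j) r),
          decide (A.FReach q (BuchiAux.seg w i j) r))) with hc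
    obtain ⟨g, m, hg, hcol⟩ := BuchiAux.ramsey_pairs c
    obtain ⟨S, τ⟩ := m
    -- the constant prefix state-set
    have hS : ∀ i, A.δSet A.I (BuchiAux.seg w 0 (g i)) = S := by
      intro i
      have := congrArg Prod.fst (hcol i (i + 1) (by omega))
      simpa [hc] using this
    set u : List α := BuchiAux.seg w 0 (g 0) with hu
    set vs : ℕ → List α := fun k => BuchiAux.seg w (g k) (g (k + 1)) with hvs
    set v : List α := vs 0 with hv
    -- all the segments have the same profile
    have hτ : ∀ k q r, (decide (A.Reach q (vs k) r), decide (A.FReach q (vs k) r)) = τ q r := by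
      intro k q r
      have := congrArg Prod.snd (hcol k (k + 1) (by omega))
      simp only [hc] at this
      exact congrFun (congrFun this q) r
    have hReachIff : ∀ k q r, A.Reach q v r ↔ A.Reach q (vs k) r := by
      intro k q r
      apply decide_eq_decide.mp
      have h1 := congrArg Prod.fst (hτ 0 q r)
      have h2 := congrArg Prod.fst (hτ k q r)
      rw [← hv] at h1
      exact h1.trans h2.symm
    have hFReachIff : ∀ k q r, A.FReach q v r ↔ A.FReach q (vs k) r := by
      intro k q r
      apply decide_eq_decide.mp
      have h1 := congrArg Prod.snd (hτ 0 q r)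
      have h2 := congrArg Prod.snd (hτ k q r)
      rw [← hv] at h1
      exact h1.trans h2.symm
    have hvne : v ≠ [] := by
      have : 0 < v.length := by
        have := hg (show (0:ℕ) < 1 by omega)
        simp [hv, hvs]
        omega
      exact List.length_pos_iff.1 this
    have hiEq : A.iEq (u ++ v) u := by
      show A.δSet A.I (u ++ v) = A.δSet A.I u
      have huv : u ++ v = BuchiAux.seg w 0 (g 1) := by
        rw [hu, hv, hvs]
        exact BuchiAux.seg_append w (Nat.zero_le _) (le_of_lt (hg (by omega)))
      rw [huv, hu, hS 1, hS 0]
    have hproCl : ∀ k, vs k ∈ A.proClass u v := by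
      intro k
      intro q _ r
      exact ⟨hReachIff k q r, hFReachIff k q r⟩
    have hwO : w ∈ OmegaLang (A.iClass u) (A.proClass u v) := by
      have hflat : ∀ k, u ++ ((List.range k).map vs).flatten = BuchiAux.seg w 0 (g k) := by
        intro k
        induction k with
        | zero => simp [hu]
        | succ k ih =>
          rw [List.range_succ]
          simp only [List.map_append, List.map_cons, List.map_nil, List.flatten_append,
            List.flatten_cons, List.flatten_nil, List.append_nil, ← List.append_assoc, ih]
          rw [hvs]
          exact BuchiAux.seg_append w (Nat.zero_le _) (le_of_lt (hg (by omega)))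
      refine ⟨u, ?_, vs, fun k => ⟨?_, hproCl k⟩, ?_⟩
      · show A.iEq u u
        rfl
      · have : 0 < (vs k).length := by
          simp [hvs]
          exact hg (by omega)
        exact List.length_pos_iff.1 this
      · intro k
        rw [hflat k]
        exact BuchiAux.seg_eq_ofFn w (g k)
    refine ⟨u, v, hvne, hiEq, hwO, ?_⟩
    rw [Set.eq_empty_iff_forall_notMem]
    rintro x ⟨hx1, hx2⟩
    exact hw (BuchiAux.key hiEq hwO hx1 hx2)
  · rintro ⟨u, v, _, _, hwO, hdisj⟩ hwL
    have : w ∈ OmegaLang (A.iClass u) (A.proClass u v) ∩ A.L := ⟨hwO, hwL⟩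
    rw [hdisj] at this
    exact this
end

section
/- Let A be an NBW over an alphabet Σ. The right congruence ∼ᵒ refines ∼ⁱ: for all u₁, u₂ ∈ Σ*, if u₁ ∼ᵒ u₂ then u₁ ∼ⁱ u₂ (equivalently, φ(P₀, u₁) = φ(P₀, u₂) implies δ(I, u₁) = δ(I, u₂)). -/
open scoped Classical

/-- Drop empty sets from a list of sets. -/
noncomputable def filterNonempty {Q : Type} : List (Set Q) → List (Set Q)
  | [] => []
  | S :: rest => if S = ∅ then filterNonempty rest else S :: filterNonempty rest

/-- Replace each entry by itself minus the union of all later entries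
(keep only the rightmost occurrence of each state). -/
def pruneRight {Q : Type} : List (Set Q) → List (Set Q)
  | [] => []
  | S :: rest => (S \ rest.foldr (· ∪ ·) ∅) :: pruneRight rest

namespace NBW

variable {α Q : Type}

/-- The ordered `a`-successor `φ(⟨S₁, …, S_k⟩, a)`: split each `δ(S_j, a)` into its
non-accepting part followed by its accepting part, keep only the rightmost
occurrence of each state, and delete empty entries. -/
noncomputable def stepP (A : NBW α Q) (P : List (Set Q)) (a : α) : List (Set Q) :=
  filterNonempty (pruneRight
    ((P.map fun S => [A.δStep S a \ A.F, A.δStep S a ∩ A.F]).flatten))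

/-- The initial ordered partition `P₀ = ⟨I∖F, I∩F⟩` with empty entries deleted. -/
noncomputable def P0 (A : NBW α Q) : List (Set Q) :=
  filterNonempty [A.I \ A.F, A.I ∩ A.F]

/-- Extension of `φ` to finite words. -/
noncomputable def phi (A : NBW α Q) (P : List (Set Q)) (u : List α) : List (Set Q) :=
  u.foldl A.stepP P

/-- The right congruence `∼ᵒ`: `u₁ ∼ᵒ u₂` iff `φ(P₀, u₁) = φ(P₀, u₂)`. -/
def oEq (A : NBW α Q) (u₁ u₂ : List α) : Prop := A.phi A.P0 u₁ = A.phi A.P0 u₂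

/-- The `∼ᵒ`-equivalence class of `u`. -/
def oClass (A : NBW α Q) (u : List α) : Set (List α) := {x | A.oEq u x}

/-- `max { j | ∃ p ∈ S_j, p →^v q }` for an ordered partition `P = ⟨S₀, S₁, …⟩`
(indices 0-based). -/
noncomputable def maxRank (A : NBW α Q) (P : List (Set Q)) (v : List α) (q : Q) : ℕ :=
  sSup {j | ∃ p ∈ P.getD j ∅, A.Reach p v q}

/-- The relation `≈ᵒᵤ`: `v₁ ≈ᵒᵤ v₂` iff `uv₁ ∼ᵒ uv₂` and, writing
`φ(P₀, u) = ⟨S₁, …, S_k⟩`, for every `q ∈ δ(I, uv₁)` the maximal index `j` with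
`∃ p ∈ S_j, p →^{v₁} q` equals the maximal index `j` with `∃ p ∈ S_j, p →^{v₂} q`. -/
def oproEq (A : NBW α Q) (u v₁ v₂ : List α) : Prop :=
  A.oEq (u ++ v₁) (u ++ v₂) ∧
  ∀ q ∈ A.δSet A.I (u ++ v₁),
    A.maxRank (A.phi A.P0 u) v₁ q = A.maxRank (A.phi A.P0 u) v₂ q

/-- The `≈ᵒᵤ`-equivalence class of `v`. -/
def oproClass (A : NBW α Q) (u v : List α) : Set (List α) := {x | A.oproEq u v x}

end NBW

/-- Union of the entries of a list of sets. -/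
def listUnion {Q : Type} (L : List (Set Q)) : Set Q := L.foldr (· ∪ ·) ∅

lemma listUnion_cons {Q : Type} (S : Set Q) (L : List (Set Q)) :
    listUnion (S :: L) = S ∪ listUnion L := rfl

lemma listUnion_filterNonempty {Q : Type} (L : List (Set Q)) :
    listUnion (filterNonempty L) = listUnion L := by
  induction L with
  | nil => rfl
  | cons S rest ih =>
      simp only [filterNonempty]
      split
      · next h => rw [ih, listUnion_cons, h, Set.empty_union]
      · rw [listUnion_cons, listUnion_cons, ih]

lemma listUnion_pruneRight {Q : Type} (L : List (Set Q)) :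
    listUnion (pruneRight L) = listUnion L := by
  induction L with
  | nil => rfl
  | cons S rest ih =>
      simp only [pruneRight, listUnion, List.foldr_cons]
      rw [show (pruneRight rest).foldr (· ∪ ·) ∅ = listUnion (pruneRight rest) from rfl, ih]
      rw [show (rest.foldr (· ∪ ·) ∅) = listUnion rest from rfl]
      rw [Set.diff_union_self]

namespace NBW

variable {α Q : Type}

lemma δStep_union (A : NBW α Q) (S T : Set Q) (a : α) :
    A.δStep (S ∪ T) a = A.δStep S a ∪ A.δStep T a := by
  ext x
  simp only [δStep, Set.mem_iUnion, Set.mem_union]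
  constructor
  · rintro ⟨q, hq | hq, hx⟩
    · exact Or.inl ⟨q, hq, hx⟩
    · exact Or.inr ⟨q, hq, hx⟩
  · rintro (⟨q, hq, hx⟩ | ⟨q, hq, hx⟩)
    · exact ⟨q, Or.inl hq, hx⟩
    · exact ⟨q, Or.inr hq, hx⟩

lemma δStep_empty (A : NBW α Q) (a : α) : A.δStep ∅ a = ∅ := by
  simp [δStep]

lemma listUnion_flatten (A : NBW α Q) (P : List (Set Q)) (a : α) :
    listUnion ((P.map fun S => [A.δStep S a \ A.F, A.δStep S a ∩ A.F]).flatten)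
      = A.δStep (listUnion P) a := by
  induction P with
  | nil => simp [listUnion, δStep_empty]
  | cons S rest ih =>
      simp only [List.map_cons, List.flatten_cons, listUnion, List.foldr_cons,
        List.foldr_append] at *
      rw [ih, δStep_union]
      simp only [List.foldr_nil]
      rw [← Set.union_assoc, Set.diff_union_inter]

lemma listUnion_stepP (A : NBW α Q) (P : List (Set Q)) (a : α) :
    listUnion (A.stepP P a) = A.δStep (listUnion P) a := by
  rw [stepP, listUnion_filterNonempty, listUnion_pruneRight, listUnion_flatten]

lemma union_phi (A : NBW α Q) (S : Set Q) (u : List α) (h : listUnion (A.phi A.P0 []) = S) :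
    listUnion (A.phi A.P0 u) = A.δSet S u := by
  subst h
  induction u using List.reverseRecOn with
  | nil => rfl
  | append_singleton u a ih =>
      simp only [phi, δSet, List.foldl_append, List.foldl_cons, List.foldl_nil] at *
      rw [A.listUnion_stepP, ih]

lemma union_P0 (A : NBW α Q) : listUnion (A.phi A.P0 []) = A.I := by
  show listUnion A.P0 = A.I
  rw [P0, listUnion_filterNonempty]
  simp [listUnion, Set.diff_union_inter]

end NBW

/-- `∼ᵒ` refines `∼ⁱ`: `φ(P₀, u₁) = φ(P₀, u₂)` implies
`δ(I, u₁) = δ(I, u₂)`. -/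
theorem oEq_refines_iEq {α Q : Type} [Fintype Q] (A : NBW α Q) :
    ∀ u₁ u₂ : List α, A.oEq u₁ u₂ → A.iEq u₁ u₂ := by
  intro u₁ u₂ h
  unfold NBW.iEq
  rw [← A.union_phi A.I u₁ (A.union_P0), ← A.union_phi A.I u₂ (A.union_P0)]
  exact congrArg listUnion h
end
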